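/- arXiv:1208.1649 — 11 statements merged into one kernel-verified Lean document; each statement's English description precedes it below -/
import Mathlib

section
/- Let (P, L) be a finite projective plane of odd order n and let A, B be two distinct points, with ℓ the unique line through A and B. Then the sum, over all lines m ≠ ℓ incident with A and all lines m ≠ ℓ incident with B, of the ZMod 2 indicator functions of the point sets of these lines, equals the indicator function of the two-element set {A, B}. Equivalently, flipping the switches of the 2n lines through A or B other than ℓ toggles exactly the bulbs at A and B and leaves every other bulb unchanged. -/
/-!
A line through `A` other than `ℓ` meets `ℓ` only in `A`. So at `A` the sum counts the `n`
lines through `A` other than `ℓ`, an odd number, and none through `B`; at the other points of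
`ℓ` it counts nothing; and through a point off `ℓ` it counts exactly one line from `A` and one
from `B`, which cancel mod 2.
-/
open scoped Classical

namespace Configuration

variable {P L : Type*} [Membership P L]

theorem Nondegenerate.filter_mem_ne_mem_eq_empty [Nondegenerate P L] [Fintype L]
    {p x : P} {ℓ : L} (hp : p ∈ ℓ) (hx : x ∈ ℓ) (hpx : p ≠ x) :
    (Finset.univ.filter fun m : L => (p ∈ m ∧ m ≠ ℓ) ∧ x ∈ m) = ∅ :=
  Finset.filter_eq_empty_iff.2 fun _ _ ⟨⟨hpm, hmℓ⟩, hxm⟩ =>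
    hmℓ ((Nondegenerate.eq_or_eq hpm hxm hp hx).resolve_left hpx)

theorem HasLines.filter_mem_ne_mem_eq_singleton [HasLines P L] [Fintype L]
    {p x : P} {ℓ : L} (hx : x ∉ ℓ) (hpx : p ≠ x) :
    (Finset.univ.filter fun m : L => (p ∈ m ∧ m ≠ ℓ) ∧ x ∈ m) = {HasLines.mkLine hpx} := by
  obtain ⟨hp, hx'⟩ := HasLines.mkLine_ax (L := L) hpx
  ext m
  simp only [Finset.mem_filter, Finset.mem_univ, true_and, Finset.mem_singleton]
  constructor
  · rintro ⟨⟨hpm, -⟩, hxm⟩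
    exact (Nondegenerate.eq_or_eq hpm hxm hp hx').resolve_left hpx
  · rintro rfl
    exact ⟨⟨hp, fun h => hx (h ▸ hx')⟩, hx'⟩

namespace ProjectivePlane

variable [ProjectivePlane P L] [Finite P] [Fintype L]

theorem card_filter_mem (p : P) :
    (Finset.univ.filter fun m : L => p ∈ m).card = order P L + 1 := by
  rw [← lineCount_eq L p, lineCount, Nat.card_eq_fintype_card, Fintype.card_subtype]

theorem card_filter_mem_ne {p : P} {ℓ : L} (hp : p ∈ ℓ) :
    (Finset.univ.filter fun m : L => p ∈ m ∧ m ≠ ℓ).card = order P L := by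
  rw [← Finset.filter_filter, Finset.filter_ne', Finset.card_erase_of_mem (by simpa using hp),
    card_filter_mem, Nat.add_sub_cancel]

theorem card_filter_mem_ne_mem {p : P} {ℓ : L} (hp : p ∈ ℓ) (x : P) :
    (Finset.univ.filter fun m : L => (p ∈ m ∧ m ≠ ℓ) ∧ x ∈ m).card =
      if x = p then order P L else if x ∈ ℓ then 0 else 1 := by
  split_ifs with hxp hx
  · subst hxp
    simp only [and_iff_left_of_imp fun h : x ∈ _ ∧ _ => h.1, card_filter_mem_ne hp]
  · rw [Nondegenerate.filter_mem_ne_mem_eq_empty hp hx (Ne.symm hxp), Finset.card_empty]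
  · rw [HasLines.filter_mem_ne_mem_eq_singleton hx (Ne.symm hxp), Finset.card_singleton]

end ProjectivePlane

end Configuration

/-- In a finite projective plane of odd order, the mod-2 sum of the indicator functions of
all lines through `A` other than `ℓ` together with all lines through `B` other than `ℓ`,
where `ℓ` is the unique line through the distinct points `A` and `B`, is the indicator
function of `{A, B}`. -/
theorem stmt_2 {P L : Type*} [Membership P L] [Configuration.ProjectivePlane P L]
    [Fintype P] [Fintype L]
    (hodd : Odd (Configuration.ProjectivePlane.order P L))
    (A B : P) (hAB : A ≠ B) (ℓ : L) (hA : A ∈ ℓ) (hB : B ∈ ℓ) :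
    ∀ x : P,
      (∑ m ∈ Finset.univ.filter fun m : L => A ∈ m ∧ m ≠ ℓ,
          if x ∈ m then (1 : ZMod 2) else 0) +
        (∑ m ∈ Finset.univ.filter fun m : L => B ∈ m ∧ m ≠ ℓ,
          if x ∈ m then (1 : ZMod 2) else 0) =
      if x = A ∨ x = B then 1 else 0 := by
  intro x
  have hn : (Configuration.ProjectivePlane.order P L : ZMod 2) = 1 := ZMod.natCast_eq_one_iff_odd.2 hodd
  simp only [Finset.sum_boole, Finset.filter_filter,
    Configuration.ProjectivePlane.card_filter_mem_ne_mem hA,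
    Configuration.ProjectivePlane.card_filter_mem_ne_mem hB]
  by_cases hxA : x = A
  · simp [hxA, hAB, hA, hn]
  by_cases hxB : x = B
  · simp [hxB, hAB.symm, hB, hn]
  by_cases hx : x ∈ ℓ <;> simp [hxA, hxB, hx, CharTwo.add_self_eq_zero]
end

section
/- Let (P, L) be a finite projective plane of odd order n. Then every configuration c : P → ZMod 2 with at least 2 lit bulbs is reducible: there exists a finite set S of lines such that flipping all switches in S yields a configuration with strictly fewer lit bulbs than c. (Lemma 2.1, odd case) -/
open scoped Classical

theorem aux_unique_line {P L : Type*} [Membership P L] [Configuration.ProjectivePlane P L]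
    {x y : P} {l₁ l₂ : L} (hxy : x ≠ y) (h1 : x ∈ l₁) (h2 : y ∈ l₁) (h3 : x ∈ l₂)
    (h4 : y ∈ l₂) : l₁ = l₂ :=
  (Configuration.Nondegenerate.eq_or_eq h1 h2 h3 h4).resolve_left hxy

/-- On a finite projective plane of odd order, every configuration with at least 2 lit
bulbs is reducible: some finite set of line switches strictly decreases the number of
lit bulbs. -/
theorem stmt_3 {P L : Type*} [Membership P L] [Configuration.ProjectivePlane P L]
    [Fintype P] [Fintype L]
    (hodd : Odd (Configuration.ProjectivePlane.order P L))
    (c : P → ZMod 2)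
    (hc : 2 ≤ (Finset.univ.filter fun x : P => c x = 1).card) :
    ∃ S : Finset L,
      (Finset.univ.filter fun x : P =>
          c x + ((S.filter fun ℓ : L => x ∈ ℓ).card : ZMod 2) = 1).card <
        (Finset.univ.filter fun x : P => c x = 1).card := by
  classical
  set n := Configuration.ProjectivePlane.order P L with hn
  obtain ⟨p, hp, q, hq, hpq⟩ := Finset.one_lt_card.mp hc
  rw [Finset.mem_filter] at hp hq
  have hcp : c p = 1 := hp.2
  have hcq : c q = 1 := hq.2
  set m : L := Configuration.HasLines.mkLine hpq with hm
  have hpm : p ∈ m := (Configuration.HasLines.mkLine_ax hpq).1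
  have hqm : q ∈ m := (Configuration.HasLines.mkLine_ax hpq).2
  set A : Finset L := Finset.univ.filter fun ℓ : L => p ∈ ℓ with hA
  set B : Finset L := Finset.univ.filter fun ℓ : L => q ∈ ℓ with hB
  set S : Finset L := (A ∪ B).erase m with hS
  -- card of lines through a point
  have hcardA : A.card = n + 1 := by
    have := Configuration.ProjectivePlane.lineCount_eq L p
    rwa [Configuration.lineCount, Nat.card_eq_fintype_card, Fintype.card_subtype] at this
  have hcardB : B.card = n + 1 := by
    have := Configuration.ProjectivePlane.lineCount_eq L q
    rwa [Configuration.lineCount, Nat.card_eq_fintype_card, Fintype.card_subtype] at this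
  -- flip count at p is n
  have hfp : (S.filter fun ℓ : L => p ∈ ℓ) = A.erase m := by
    ext ℓ
    simp only [hS, hA, hB, Finset.mem_filter, Finset.mem_erase, Finset.mem_union,
      Finset.mem_univ, true_and]
    tauto
  have hfq : (S.filter fun ℓ : L => q ∈ ℓ) = B.erase m := by
    ext ℓ
    simp only [hS, hA, hB, Finset.mem_filter, Finset.mem_erase, Finset.mem_union,
      Finset.mem_univ, true_and]
    tauto
  have hcount_p : ((S.filter fun ℓ : L => p ∈ ℓ).card : ZMod 2) = 1 := by
    have hmA : m ∈ A := by simp [hA, hpm]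
    have : (S.filter fun ℓ : L => p ∈ ℓ).card = n := by
      rw [hfp, Finset.card_erase_of_mem hmA, hcardA]; omega
    rw [this]
    obtain ⟨k, hk⟩ := hodd
    rw [hk]; push_cast
    rw [show ((2 : ZMod 2)) = 0 by decide]; ring
  have hcount_q : ((S.filter fun ℓ : L => q ∈ ℓ).card : ZMod 2) = 1 := by
    have hmB : m ∈ B := by simp [hB, hqm]
    have : (S.filter fun ℓ : L => q ∈ ℓ).card = n := by
      rw [hfq, Finset.card_erase_of_mem hmB, hcardB]; omega
    rw [this]
    obtain ⟨k, hk⟩ := hodd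
    rw [hk]; push_cast
    rw [show ((2 : ZMod 2)) = 0 by decide]; ring
  -- flip count at other points is even
  have hcount_other : ∀ x : P, x ≠ p → x ≠ q →
      ((S.filter fun ℓ : L => x ∈ ℓ).card : ZMod 2) = 0 := by
    intro x hxp hxq
    by_cases hxm : x ∈ m
    · have : (S.filter fun ℓ : L => x ∈ ℓ) = ∅ := by
        rw [Finset.eq_empty_iff_forall_notMem]
        intro ℓ hℓ
        simp only [hS, hA, hB, Finset.mem_filter, Finset.mem_erase, Finset.mem_union,
          Finset.mem_univ, true_and] at hℓ
        obtain ⟨⟨hne, hor⟩, hxℓ⟩ := hℓ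
        rcases hor with h | h
        · exact hne (aux_unique_line hxp hxℓ h hxm hpm)
        · exact hne (aux_unique_line hxq hxℓ h hxm hqm)
      rw [this]; simp
    · set ℓ₁ : L := Configuration.HasLines.mkLine hxp with hl1
      set ℓ₂ : L := Configuration.HasLines.mkLine hxq with hl2
      have h1x : x ∈ ℓ₁ := (Configuration.HasLines.mkLine_ax hxp).1
      have h1p : p ∈ ℓ₁ := (Configuration.HasLines.mkLine_ax hxp).2
      have h2x : x ∈ ℓ₂ := (Configuration.HasLines.mkLine_ax hxq).1
      have h2q : q ∈ ℓ₂ := (Configuration.HasLines.mkLine_ax hxq).2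
      have hne12 : ℓ₁ ≠ ℓ₂ := by
        intro h
        have hq1 : q ∈ ℓ₁ := h ▸ h2q
        have : ℓ₁ = m := aux_unique_line hpq h1p hq1 hpm hqm
        exact hxm (this ▸ h1x)
      have hfilter : (S.filter fun ℓ : L => x ∈ ℓ) = {ℓ₁, ℓ₂} := by
        ext ℓ
        simp only [hS, hA, hB, Finset.mem_filter, Finset.mem_erase, Finset.mem_union,
          Finset.mem_univ, true_and, Finset.mem_insert, Finset.mem_singleton]
        constructor
        · rintro ⟨⟨hne, hor⟩, hxℓ⟩
          rcases hor with h | h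
          · exact Or.inl (aux_unique_line hxp hxℓ h h1x h1p)
          · exact Or.inr (aux_unique_line hxq hxℓ h h2x h2q)
        · rintro (rfl | rfl)
          · refine ⟨⟨fun h => hxm (h ▸ h1x), Or.inl h1p⟩, h1x⟩
          · refine ⟨⟨fun h => hxm (h ▸ h2x), Or.inr h2q⟩, h2x⟩
      rw [hfilter, Finset.card_insert_of_notMem (by simpa using hne12),
        Finset.card_singleton]
      decide
  refine ⟨S, ?_⟩
  have hsub : (Finset.univ.filter fun x : P =>
      c x + ((S.filter fun ℓ : L => x ∈ ℓ).card : ZMod 2) = 1) ⊆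
      (Finset.univ.filter fun x : P => c x = 1).erase p := by
    intro x hx
    simp only [Finset.mem_filter, Finset.mem_univ, true_and] at hx
    by_cases hxp : x = p
    · subst hxp
      rw [hcount_p, hcp] at hx
      exact absurd hx (by decide)
    by_cases hxq : x = q
    · subst hxq
      rw [hcount_q, hcq] at hx
      exact absurd hx (by decide)
    rw [hcount_other x hxp hxq, add_zero] at hx
    simp [Finset.mem_erase, hxp, hx]
  calc (Finset.univ.filter fun x : P =>
          c x + ((S.filter fun ℓ : L => x ∈ ℓ).card : ZMod 2) = 1).card
      ≤ ((Finset.univ.filter fun x : P => c x = 1).erase p).card := Finset.card_le_card hsub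
    _ < (Finset.univ.filter fun x : P => c x = 1).card :=
        Finset.card_erase_lt_of_mem (by simp [hcp])
end

section
/- Let (P, L) be a finite projective plane of order 2. Then every configuration c : P → ZMod 2 with at least 2 lit bulbs is reducible by flipping a single switch: there exists a line ℓ such that the configuration obtained from c by toggling the bulbs on ℓ has strictly fewer lit bulbs than c. (Lemma 2.1, case p = 2) -/
open scoped Classical

/-- On a finite projective plane of order 2 (the Fano plane), every configuration with at
least 2 lit bulbs can be reduced by flipping a single line switch. -/
theorem stmt_4 {P L : Type*} [Membership P L] [Configuration.ProjectivePlane P L]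
    [Fintype P] [Fintype L]
    (h2 : Configuration.ProjectivePlane.order P L = 2)
    (c : P → ZMod 2)
    (hc : 2 ≤ (Finset.univ.filter fun x : P => c x = 1).card) :
    ∃ ℓ : L,
      (Finset.univ.filter fun x : P =>
          (if x ∈ ℓ then c x + 1 else c x) = 1).card <
        (Finset.univ.filter fun x : P => c x = 1).card := by
  classical
  set S := Finset.univ.filter fun x : P => c x = 1 with hS
  obtain ⟨p, hp, q, hq, hpq⟩ := Finset.one_lt_card.mp hc
  let ℓ : L := Configuration.HasLines.mkLine hpq
  have hpℓ : p ∈ ℓ := (Configuration.HasLines.mkLine_ax hpq).1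
  have hqℓ : q ∈ ℓ := (Configuration.HasLines.mkLine_ax hpq).2
  refine ⟨ℓ, ?_⟩
  set Λ := Finset.univ.filter fun x : P => x ∈ ℓ with hΛ
  have hΛcard : Λ.card = 3 := by
    have h := Configuration.ProjectivePlane.pointCount_eq P ℓ
    rw [h2] at h
    rw [hΛ]
    rw [show (Finset.univ.filter fun x : P => x ∈ ℓ).card
        = Fintype.card {x : P // x ∈ ℓ} from (Fintype.card_subtype _).symm]
    rw [← Nat.card_eq_fintype_card]
    exact h
  have key : ∀ a : ZMod 2, (a + 1 = 1 ↔ ¬ a = 1) := by decide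
  have hT : (Finset.univ.filter fun x : P =>
      (if x ∈ ℓ then c x + 1 else c x) = 1) = (S \ Λ) ∪ (Λ \ S) := by
    ext x
    by_cases hx : x ∈ ℓ <;>
      simp [hS, hΛ, hx, key]
  rw [hT]
  have hdisj : Disjoint (S \ Λ) (Λ \ S) :=
    disjoint_sdiff_sdiff
  rw [Finset.card_union_of_disjoint hdisj]
  have h1 : (S \ Λ).card + (S ∩ Λ).card = S.card := Finset.card_sdiff_add_card_inter S Λ
  have h2' : (Λ \ S).card + (Λ ∩ S).card = Λ.card := Finset.card_sdiff_add_card_inter Λ S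
  rw [Finset.inter_comm] at h2'
  have hk : 2 ≤ (S ∩ Λ).card := by
    have : ({p, q} : Finset P) ⊆ S ∩ Λ := by
      intro x hx
      simp only [Finset.mem_insert, Finset.mem_singleton] at hx
      rcases hx with rfl | rfl
      · exact Finset.mem_inter.mpr ⟨hp, Finset.mem_filter.mpr ⟨Finset.mem_univ _, hpℓ⟩⟩
      · exact Finset.mem_inter.mpr ⟨hq, Finset.mem_filter.mpr ⟨Finset.mem_univ _, hqℓ⟩⟩
    calc 2 = ({p, q} : Finset P).card := by rw [Finset.card_insert_of_notMem (by simpa using hpq), Finset.card_singleton]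
    _ ≤ _ := Finset.card_le_card this
  omega
end

section
/- Let (P, L) be a finite projective plane of odd order n. Then every configuration c : P → ZMod 2 with an even number of lit bulbs can be reduced to 0 lit bulbs: there exists a finite set S of lines such that flipping all switches in S transforms c into the identically zero configuration. Equivalently, the ZMod 2 span of the indicator functions of the lines contains every function P → ZMod 2 of even support. (Theorem 2.3, even part) -/
open scoped Classical symmDiff

open Configuration Configuration.ProjectivePlane Finset

section aux
variable {P L : Type*} [Membership P L] [Configuration.ProjectivePlane P L]
    [Fintype P] [Fintype L]

lemma symm_card (S T : Finset L) (x : P) :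
    (((S ∆ T).filter fun ℓ : L => x ∈ ℓ).card : ZMod 2)
      = ((S.filter fun ℓ : L => x ∈ ℓ).card : ZMod 2)
        + ((T.filter fun ℓ : L => x ∈ ℓ).card : ZMod 2) := by
  set A := S.filter fun ℓ : L => x ∈ ℓ
  set B := T.filter fun ℓ : L => x ∈ ℓ
  have hf : (S ∆ T).filter (fun ℓ : L => x ∈ ℓ) = A ∆ B := by
    ext ℓ
    simp [A, B, symmDiff_def, Finset.mem_union, Finset.mem_sdiff, Finset.mem_filter]
    tauto
  have h1 : (A ∆ B).card + 2 * (A ∩ B).card = A.card + B.card := by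
    have d : Disjoint (A \ B) (B \ A) := disjoint_sdiff_sdiff
    have e : (A ∆ B).card = (A \ B).card + (B \ A).card := by
      rw [symmDiff_def, Finset.sup_eq_union, Finset.card_union_of_disjoint d]
    have f1 := Finset.card_sdiff_add_card_inter A B
    have f2 := Finset.card_sdiff_add_card_inter B A
    rw [Finset.inter_comm] at f2
    omega
  rw [hf]
  have h2 : ((A ∆ B).card : ZMod 2) + 2 * ((A ∩ B).card : ZMod 2)
      = (A.card : ZMod 2) + (B.card : ZMod 2) := by exact_mod_cast congrArg (Nat.cast : ℕ → ZMod 2) h1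
  rw [show (2 : ZMod 2) = 0 from rfl, zero_mul, add_zero] at h2
  exact h2

lemma pair_flip (hodd : Odd (Configuration.ProjectivePlane.order P L))
    {a b : P} (hab : a ≠ b) :
    ∃ S : Finset L, ∀ x : P,
      ((S.filter fun ℓ : L => x ∈ ℓ).card : ZMod 2)
        = if x = a ∨ x = b then 1 else 0 := by
  have line_through : ∀ p : P, ((Finset.univ.filter fun ℓ : L => p ∈ ℓ).card : ZMod 2) = 0 := by
    intro p
    have h1 : (Finset.univ.filter fun ℓ : L => p ∈ ℓ).card = lineCount L p := by
      rw [lineCount, Nat.card_eq_fintype_card, Fintype.card_subtype]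
    rw [h1, lineCount_eq, ZMod.natCast_eq_zero_iff]
    obtain ⟨k, hk⟩ := hodd
    omega
  have unique_line : ∀ {p q : P}, p ≠ q →
      (Finset.univ.filter fun ℓ : L => p ∈ ℓ ∧ q ∈ ℓ).card = 1 := by
    intro p q hpq
    rw [Finset.card_eq_one]
    refine ⟨HasLines.mkLine hpq, ?_⟩
    ext ℓ
    simp only [Finset.mem_filter, Finset.mem_univ, true_and, Finset.mem_singleton]
    constructor
    · rintro ⟨h1, h2⟩
      exact ((Nondegenerate.eq_or_eq h1 h2 (HasLines.mkLine_ax hpq).1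
        (HasLines.mkLine_ax hpq).2).resolve_left hpq)
    · rintro rfl
      exact ⟨(HasLines.mkLine_ax hpq).1, (HasLines.mkLine_ax hpq).2⟩
  refine ⟨(Finset.univ.filter fun ℓ : L => a ∈ ℓ) ∆ (Finset.univ.filter fun ℓ : L => b ∈ ℓ), ?_⟩
  intro x
  rw [symm_card]
  have key : ∀ {p : P}, x ≠ p →
      (((Finset.univ.filter fun ℓ : L => p ∈ ℓ).filter fun ℓ : L => x ∈ ℓ).card : ZMod 2) = 1 := by
    intro p hxp
    have : ((Finset.univ.filter fun ℓ : L => p ∈ ℓ).filter fun ℓ : L => x ∈ ℓ)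
        = Finset.univ.filter fun ℓ : L => x ∈ ℓ ∧ p ∈ ℓ := by
      ext ℓ; simp [Finset.mem_filter]; tauto
    rw [this, unique_line hxp]
    norm_num
  have self : ∀ p : P,
      (((Finset.univ.filter fun ℓ : L => p ∈ ℓ).filter fun ℓ : L => p ∈ ℓ).card : ZMod 2) = 0 := by
    intro p
    rw [Finset.filter_filter]
    simpa using line_through p
  by_cases hxa : x = a
  · subst hxa
    rw [if_pos (Or.inl rfl), self, key hab, zero_add]
  · by_cases hxb : x = b
    · subst hxb
      rw [if_pos (Or.inr rfl), key (Ne.symm hab), self, add_zero]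
    · rw [if_neg (by tauto), key hxa, key hxb]
      decide

end aux

section main
variable {P L : Type*} [Membership P L] [Configuration.ProjectivePlane P L]
    [Fintype P] [Fintype L]

lemma main_ind (hodd : Odd (Configuration.ProjectivePlane.order P L)) :
    ∀ k : ℕ, ∀ c : P → ZMod 2,
      Even (Finset.univ.filter fun x : P => c x = 1).card →
      (Finset.univ.filter fun x : P => c x = 1).card = k →
      ∃ S : Finset L, ∀ x : P, c x + ((S.filter fun ℓ : L => x ∈ ℓ).card : ZMod 2) = 0 := by
  intro k
  induction k using Nat.strong_induction_on with
  | _ k ih =>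
    intro c hc hk
    rcases Nat.eq_zero_or_pos k with h0 | hpos
    · subst h0
      have hempty : (Finset.univ.filter fun x : P => c x = 1) = ∅ :=
        Finset.card_eq_zero.mp hk
      refine ⟨∅, fun x => ?_⟩
      have hx : c x ≠ 1 := by
        intro h
        have : x ∈ (Finset.univ.filter fun x : P => c x = 1) := by
          simp [h]
        rw [hempty] at this
        exact absurd this (Finset.notMem_empty x)
      have hx0 : c x = 0 := by
        have : ∀ z : ZMod 2, z = 0 ∨ z = 1 := by decide
        rcases this (c x) with h | h
        · exact h
        · exact absurd h hx
      simp [hx0]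
    · have h2 : 1 < (Finset.univ.filter fun x : P => c x = 1).card := by
        rcases hc with ⟨m, hm⟩
        omega
      obtain ⟨a, ha, b, hb, hab⟩ := Finset.one_lt_card.mp h2
      simp only [Finset.mem_filter] at ha hb
      obtain ⟨S₀, hS₀⟩ := pair_flip (L := L) hodd hab
      set c' : P → ZMod 2 := fun x => c x + ((S₀.filter fun ℓ : L => x ∈ ℓ).card : ZMod 2)
        with hc'
      have hc'a : c' a = 0 := by
        show c a + ((S₀.filter fun ℓ : L => a ∈ ℓ).card : ZMod 2) = 0
        rw [hS₀ a, if_pos (Or.inl rfl), ha.2]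
        decide
      have hc'b : c' b = 0 := by
        show c b + ((S₀.filter fun ℓ : L => b ∈ ℓ).card : ZMod 2) = 0
        rw [hS₀ b, if_pos (Or.inr rfl), hb.2]
        decide
      have hc'x : ∀ x : P, x ≠ a → x ≠ b → c' x = c x := by
        intro x hxa hxb
        show c x + ((S₀.filter fun ℓ : L => x ∈ ℓ).card : ZMod 2) = c x
        rw [hS₀ x, if_neg (by tauto)]
        ring
      have hfilt : (Finset.univ.filter fun x : P => c' x = 1)
          = ((Finset.univ.filter fun x : P => c x = 1).erase a).erase b := by
        ext x
        simp only [Finset.mem_filter, Finset.mem_univ, true_and, Finset.mem_erase]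
        constructor
        · intro hx
          have hxa : x ≠ a := by rintro rfl; rw [hc'a] at hx; exact absurd hx (by decide)
          have hxb : x ≠ b := by rintro rfl; rw [hc'b] at hx; exact absurd hx (by decide)
          rw [hc'x x hxa hxb] at hx
          exact ⟨hxb, hxa, hx⟩
        · rintro ⟨hxb, hxa, hx⟩
          rw [hc'x x hxa hxb]
          exact hx
      have hmemerase : a ∈ ((Finset.univ.filter fun x : P => c x = 1).erase b) := by
        refine Finset.mem_erase.mpr ⟨hab, ?_⟩
        simp [ha.2]
      have hcard : (Finset.univ.filter fun x : P => c' x = 1).card = k - 2 := by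
        rw [hfilt, Finset.erase_right_comm, Finset.card_erase_of_mem hmemerase,
          Finset.card_erase_of_mem (by simp [hb.2]), hk]
        omega
      have hklt : k - 2 < k := by omega
      have heven : Even (Finset.univ.filter fun x : P => c' x = 1).card := by
        rw [hcard]
        rcases hc with ⟨m, hm⟩
        refine ⟨m - 1, by omega⟩
      obtain ⟨S', hS'⟩ := ih (k - 2) hklt c' heven hcard
      refine ⟨S' ∆ S₀, fun x => ?_⟩
      rw [symm_card]
      have := hS' x
      simp only [hc'] at this
      linear_combination this
end main

/-- On a finite projective plane of odd order, every configuration with an even number of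
lit bulbs can be reduced to the identically zero configuration by flipping a finite set
of line switches. -/
theorem stmt_5 {P L : Type*} [Membership P L] [Configuration.ProjectivePlane P L]
    [Fintype P] [Fintype L]
    (hodd : Odd (Configuration.ProjectivePlane.order P L))
    (c : P → ZMod 2)
    (hc : Even (Finset.univ.filter fun x : P => c x = 1).card) :
    ∃ S : Finset L,
      ∀ x : P, c x + ((S.filter fun ℓ : L => x ∈ ℓ).card : ZMod 2) = 0 := by
  exact main_ind hodd _ c hc rfl
end

section
/- Let (P, L) be a finite projective plane of odd order n. A configuration with exactly one lit bulb is irreducible: for every finite set S of lines, the configuration obtained by flipping all switches in S has at least 1 lit bulb; in particular no flip achieves strictly fewer lit bulbs than the starting single lit bulb. -/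
open scoped Classical

/-!
Over `ZMod 2` the number of lit bulbs is congruent to the sum of the configuration, and
flipping a set `S` of lines adds `∑ x, #{ℓ ∈ S | x ∈ ℓ} = ∑ ℓ ∈ S, #{x | x ∈ ℓ}` to that sum.
Every line carries `n + 1` points, an even number when `n` is odd, so the parity of the
number of lit bulbs never changes: starting from one lit bulb, an odd number, hence at least
one, stays lit.
-/

open Finset Configuration

lemma ZMod.natCast_card_filter_eq_one {α : Type*} [Fintype α] (c : α → ZMod 2) :
    (#{x | c x = 1} : ZMod 2) = ∑ x, c x := by
  rw [natCast_card_filter]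
  refine sum_congr rfl fun x _ => ?_
  generalize c x = a
  fin_cases a <;> rfl

lemma even_sum_card_filter_mem {P L : Type*} [Membership P L] [Fintype P] (S : Finset L)
    (hS : ∀ ℓ ∈ S, Even #{x : P | x ∈ ℓ}) : Even (∑ x : P, #{ℓ ∈ S | x ∈ ℓ}) := by
  have hdouble := sum_card_bipartiteAbove_eq_sum_card_bipartiteBelow
    (s := (univ : Finset P)) (t := S) (r := fun x ℓ => x ∈ ℓ)
  simp only [bipartiteAbove, bipartiteBelow] at hdouble
  rw [hdouble]
  exact even_sum _ hS

namespace Configuration.ProjectivePlane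

variable {P L : Type*} [Membership P L] [ProjectivePlane P L] [Fintype P] [Finite L]

lemma even_card_filter_mem (hodd : Odd (order P L)) (ℓ : L) : Even #{x : P | x ∈ ℓ} := by
  have hcount : #{x : P | x ∈ ℓ} = pointCount P ℓ := by
    rw [pointCount, Nat.card_eq_fintype_card, Fintype.card_subtype]
  rw [hcount, pointCount_eq]
  exact hodd.add_one

noncomputable def flipLines (S : Finset L) (c : P → ZMod 2) (x : P) : ZMod 2 :=
  c x + #{ℓ ∈ S | x ∈ ℓ}

lemma card_filter_flipLines_eq_one_mod_two (hodd : Odd (order P L)) (S : Finset L)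
    (c : P → ZMod 2) :
    (#{x | flipLines S c x = 1} : ZMod 2) = #{x | c x = 1} := by
  have heven : Even (∑ x : P, #{ℓ ∈ S | x ∈ ℓ}) :=
    even_sum_card_filter_mem S fun ℓ _ => even_card_filter_mem hodd ℓ
  rw [ZMod.natCast_card_filter_eq_one, ZMod.natCast_card_filter_eq_one]
  simp only [flipLines]
  rw [sum_add_distrib, ← Nat.cast_sum, (ZMod.natCast_eq_zero_iff_even).mpr heven, add_zero]

end Configuration.ProjectivePlane

/-- On a finite projective plane of odd order, a configuration with exactly one lit bulb
is irreducible: after flipping any finite set of line switches at least one bulb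
remains lit. -/
theorem stmt_7 {P L : Type*} [Membership P L] [Configuration.ProjectivePlane P L]
    [Fintype P] [Fintype L]
    (hodd : Odd (Configuration.ProjectivePlane.order P L))
    (c : P → ZMod 2)
    (hc : (Finset.univ.filter fun x : P => c x = 1).card = 1) :
    ∀ S : Finset L,
      1 ≤ (Finset.univ.filter fun x : P =>
          c x + ((S.filter fun ℓ : L => x ∈ ℓ).card : ZMod 2) = 1).card := by
  intro S
  have hodd_lit : (#{x | ProjectivePlane.flipLines S c x = 1} : ZMod 2) = 1 := by
    rw [ProjectivePlane.card_filter_flipLines_eq_one_mod_two hodd, hc, Nat.cast_one]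
  refine Nat.one_le_iff_ne_zero.mpr fun hnone => zero_ne_one (α := ZMod 2) ?_
  exact (congrArg Nat.cast hnone).symm.trans hodd_lit
end

section
/- Let (P, L) be a finite projective plane of odd order n. A configuration c : P → ZMod 2 is irreducible (no flip of a finite set of line switches yields strictly fewer lit bulbs) if and only if c has at most one lit bulb. Consequently the worst case for the switching game on a projective plane of odd order is one lit bulb. (Theorem 2.3) -/
open scoped Classical

open Configuration Configuration.ProjectivePlane Finset

lemma aux_line_unique {P L : Type*} [Membership P L] [Configuration.ProjectivePlane P L]
    {p q : P} {m m' : L} (hpq : p ≠ q) (h1 : p ∈ m) (h2 : q ∈ m) (h1' : p ∈ m') (h2' : q ∈ m') :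
    m = m' :=
  (Configuration.Nondegenerate.eq_or_eq h1 h2 h1' h2').resolve_left hpq

lemma aux_zmod2 : ∀ a b : ZMod 2, ¬ a + b = 1 → a = b := by decide

lemma aux_zmod2' : ∀ a : ZMod 2, a ≠ 1 → a = 0 := by decide

lemma aux_card_points {P L : Type*} [Membership P L] [Configuration.ProjectivePlane P L]
    [Fintype P] [Fintype L] (ℓ : L) :
    (Finset.univ.filter fun x : P => x ∈ ℓ).card
      = Configuration.ProjectivePlane.order P L + 1 := by
  have h := Configuration.ProjectivePlane.pointCount_eq P ℓ
  rw [Configuration.pointCount, Nat.card_eq_fintype_card, Fintype.card_subtype] at h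
  exact h

lemma aux_card_lines {P L : Type*} [Membership P L] [Configuration.ProjectivePlane P L]
    [Fintype P] [Fintype L] (p : P) :
    (Finset.univ.filter fun m : L => p ∈ m).card
      = Configuration.ProjectivePlane.order P L + 1 := by
  have h := Configuration.ProjectivePlane.lineCount_eq L p
  rw [Configuration.lineCount, Nat.card_eq_fintype_card, Fintype.card_subtype] at h
  exact h

/-- On a finite projective plane of odd order, a configuration is irreducible (no flip of
a finite set of line switches strictly decreases the number of lit bulbs) if and only if
it has at most one lit bulb. -/
theorem stmt_8 {P L : Type*} [Membership P L] [Configuration.ProjectivePlane P L]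
    [Fintype P] [Fintype L]
    (hodd : Odd (Configuration.ProjectivePlane.order P L))
    (c : P → ZMod 2) :
    (¬ ∃ S : Finset L,
        (Finset.univ.filter fun x : P =>
            c x + ((S.filter fun ℓ : L => x ∈ ℓ).card : ZMod 2) = 1).card <
          (Finset.univ.filter fun x : P => c x = 1).card) ↔
      (Finset.univ.filter fun x : P => c x = 1).card ≤ 1 := by
  set n := Configuration.ProjectivePlane.order P L with hn
  constructor
  · -- irreducible → at most one lit bulb
    intro hirr
    by_contra hk
    push_neg at hk
    obtain ⟨p, hp, q, hq, hpq⟩ := Finset.one_lt_card.mp hk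
    rw [Finset.mem_filter] at hp hq
    have hcp : c p = 1 := hp.2
    have hcq : c q = 1 := hq.2
    set ℓ : L := Configuration.HasLines.mkLine hpq with hℓdef
    have hpℓ : p ∈ ℓ := (Configuration.HasLines.mkLine_ax hpq).1
    have hqℓ : q ∈ ℓ := (Configuration.HasLines.mkLine_ax hpq).2
    set S : Finset L :=
      ((Finset.univ.filter fun m : L => p ∈ m) ∪
        (Finset.univ.filter fun m : L => q ∈ m)).erase ℓ with hSdef
    have hmemS : ∀ m : L, m ∈ S ↔ m ≠ ℓ ∧ (p ∈ m ∨ q ∈ m) := by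
      intro m
      simp [hSdef, Finset.mem_erase, Finset.mem_union, Finset.mem_filter]
    -- parity at p
    have hfp : ((S.filter fun m : L => p ∈ m).card : ZMod 2) = 1 := by
      have hset : (S.filter fun m : L => p ∈ m)
          = (Finset.univ.filter fun m : L => p ∈ m).erase ℓ := by
        ext m
        simp only [Finset.mem_filter, Finset.mem_erase, hmemS, Finset.mem_univ, true_and]
        tauto
      have hcard : (S.filter fun m : L => p ∈ m).card = n := by
        rw [hset, Finset.card_erase_of_mem (by simp [hpℓ]), aux_card_lines]
        omega
      rw [hcard]
      obtain ⟨k, hk2⟩ := hodd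
      rw [hk2]
      push_cast
      rw [show (2 : ZMod 2) = 0 by decide]
      ring
    have hfq : ((S.filter fun m : L => q ∈ m).card : ZMod 2) = 1 := by
      have hset : (S.filter fun m : L => q ∈ m)
          = (Finset.univ.filter fun m : L => q ∈ m).erase ℓ := by
        ext m
        simp only [Finset.mem_filter, Finset.mem_erase, hmemS, Finset.mem_univ, true_and]
        tauto
      have hcard : (S.filter fun m : L => q ∈ m).card = n := by
        rw [hset, Finset.card_erase_of_mem (by simp [hqℓ]), aux_card_lines]
        omega
      rw [hcard]
      obtain ⟨k, hk2⟩ := hodd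
      rw [hk2]
      push_cast
      rw [show (2 : ZMod 2) = 0 by decide]
      ring
    -- parity elsewhere
    have hf0 : ∀ x : P, x ≠ p → x ≠ q →
        ((S.filter fun m : L => x ∈ m).card : ZMod 2) = 0 := by
      intro x hxp hxq
      by_cases hxℓ : x ∈ ℓ
      · have hset : (S.filter fun m : L => x ∈ m) = ∅ := by
          ext m
          simp only [Finset.mem_filter, hmemS, Finset.notMem_empty, iff_false, not_and]
          rintro ⟨hmℓ, hpq'⟩ hxm
          rcases hpq' with hpm | hqm
          · exact hmℓ (aux_line_unique hxp hxm hpm hxℓ hpℓ)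
          · exact hmℓ (aux_line_unique hxq hxm hqm hxℓ hqℓ)
        rw [hset]
        simp
      · have hxp' : x ≠ p := hxp
        set m₁ : L := Configuration.HasLines.mkLine hxp' with hm₁
        set m₂ : L := Configuration.HasLines.mkLine hxq with hm₂
        have hxm₁ : x ∈ m₁ := (Configuration.HasLines.mkLine_ax hxp').1
        have hpm₁ : p ∈ m₁ := (Configuration.HasLines.mkLine_ax hxp').2
        have hxm₂ : x ∈ m₂ := (Configuration.HasLines.mkLine_ax hxq).1
        have hqm₂ : q ∈ m₂ := (Configuration.HasLines.mkLine_ax hxq).2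
        have hm₁ℓ : m₁ ≠ ℓ := fun h => hxℓ (h ▸ hxm₁)
        have hm₂ℓ : m₂ ≠ ℓ := fun h => hxℓ (h ▸ hxm₂)
        have hm₁₂ : m₁ ≠ m₂ := by
          intro h
          have : m₁ = ℓ := aux_line_unique hpq hpm₁ (h ▸ hqm₂) hpℓ hqℓ
          exact hm₁ℓ this
        have hset : (S.filter fun m : L => x ∈ m) = {m₁, m₂} := by
          ext m
          simp only [Finset.mem_filter, hmemS, Finset.mem_insert, Finset.mem_singleton]
          constructor
          · rintro ⟨⟨hmℓ, hpq'⟩, hxm⟩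
            rcases hpq' with hpm | hqm
            · exact Or.inl (aux_line_unique hxp hxm hpm hxm₁ hpm₁)
            · exact Or.inr (aux_line_unique hxq hxm hqm hxm₂ hqm₂)
          · rintro (rfl | rfl)
            · exact ⟨⟨hm₁ℓ, Or.inl hpm₁⟩, hxm₁⟩
            · exact ⟨⟨hm₂ℓ, Or.inr hqm₂⟩, hxm₂⟩
        rw [hset, Finset.card_insert_of_notMem (by simpa using hm₁₂), Finset.card_singleton]
        decide
    -- the flip strictly decreases
    apply hirr
    refine ⟨S, ?_⟩
    apply Finset.card_lt_card
    constructor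
    · intro x hx
      rw [Finset.mem_filter] at hx
      have hx' := hx.2
      have hxp : x ≠ p := by
        rintro rfl
        rw [hcp, hfp] at hx'
        exact absurd hx' (by decide)
      have hxq : x ≠ q := by
        rintro rfl
        rw [hcq, hfq] at hx'
        exact absurd hx' (by decide)
      rw [hf0 x hxp hxq, add_zero] at hx'
      exact Finset.mem_filter.mpr ⟨Finset.mem_univ x, hx'⟩
    · intro hsub
      have hpmem : p ∈ Finset.univ.filter fun x : P =>
          c x + ((S.filter fun m : L => x ∈ m).card : ZMod 2) = 1 :=
        hsub (Finset.mem_filter.mpr ⟨Finset.mem_univ p, hcp⟩)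
      rw [Finset.mem_filter, hcp, hfp] at hpmem
      exact absurd hpmem.2 (by decide)
  · -- at most one lit bulb → irreducible
    intro hle
    rintro ⟨S, hS⟩
    have h1 : (Finset.univ.filter fun x : P => c x = 1).card = 1 := by omega
    have h0 : (Finset.univ.filter fun x : P =>
        c x + ((S.filter fun ℓ : L => x ∈ ℓ).card : ZMod 2) = 1).card = 0 := by omega
    have hall : ∀ x : P, c x = ((S.filter fun ℓ : L => x ∈ ℓ).card : ZMod 2) := by
      intro x
      apply aux_zmod2
      intro hcontra
      have : x ∈ Finset.univ.filter fun x : P =>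
          c x + ((S.filter fun ℓ : L => x ∈ ℓ).card : ZMod 2) = 1 :=
        Finset.mem_filter.mpr ⟨Finset.mem_univ x, hcontra⟩
      rw [Finset.card_eq_zero.mp h0] at this
      exact absurd this (Finset.notMem_empty x)
    have hsum1 : ∑ x : P, c x = 1 := by
      rw [← Finset.sum_filter_add_sum_filter_not Finset.univ (fun x : P => c x = 1)]
      have e1 : ∑ x ∈ Finset.univ.filter (fun x : P => c x = 1), c x = 1 := by
        rw [Finset.sum_congr rfl (fun x hx => (Finset.mem_filter.mp hx).2),
          Finset.sum_const, h1]
        simp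
      have e2 : ∑ x ∈ Finset.univ.filter (fun x : P => ¬ c x = 1), c x = 0 := by
        apply Finset.sum_eq_zero
        intro x hx
        exact aux_zmod2' _ (Finset.mem_filter.mp hx).2
      rw [e1, e2, add_zero]
    have hsum2 : ∑ x : P, ((S.filter fun ℓ : L => x ∈ ℓ).card : ZMod 2) = 0 := by
      rw [← Nat.cast_sum]
      have hcount : ∑ x : P, (S.filter fun ℓ : L => x ∈ ℓ).card
          = S.card * (n + 1) := by
        have e1 : ∀ x : P, (S.filter fun ℓ : L => x ∈ ℓ).card
            = ∑ ℓ ∈ S, if x ∈ ℓ then 1 else 0 := fun x => Finset.card_filter _ _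
        rw [Finset.sum_congr rfl (fun x _ => e1 x), Finset.sum_comm]
        have e2 : ∀ ℓ : L, ℓ ∈ S → (∑ x : P, if x ∈ ℓ then 1 else 0) = n + 1 := by
          intro ℓ _
          exact (Finset.card_filter _ _).symm.trans (aux_card_points ℓ)
        rw [Finset.sum_congr rfl e2, Finset.sum_const, smul_eq_mul]
      rw [hcount]
      obtain ⟨k, hk2⟩ := hodd
      rw [hk2]
      have e3 : S.card * (2 * k + 1 + 1) = 2 * (S.card * (k + 1)) := by ring
      rw [e3, Nat.cast_mul]
      simp only [mul_eq_zero, Nat.cast_ofNat, Nat.cast_mul]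
      exact Or.inl (by decide)
    rw [Finset.sum_congr rfl (fun x _ => hall x), hsum2] at hsum1
    exact absurd hsum1 (by decide)
end

section
/- Let F be a finite field of odd cardinality and consider the affine plane with point set F × F, whose lines are the affine lines {a + t • d | t ∈ F} for a, d ∈ F × F with d ≠ 0. For every point A ∈ F × F there exists a finite set S of lines such that the sum over ZMod 2 of the indicator functions of the lines in S equals the indicator function of the singleton {A}. Equivalently, flipping the switches of the lines in S toggles exactly the bulb at A and leaves all other bulbs unchanged. -/
/-!
The `q + 1` lines through `A` cover `A` an even number of times (`q` is odd) and every other point once,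
while the vertical lines partition the plane. Their symmetric difference — the non-vertical lines
through `A` together with the vertical lines missing `A` — therefore covers `A` an odd number of
times and every other point an even number of times.
-/

open scoped Classical

/-- The affine line in `F × F` through the point `a` with direction `d`. -/
def affLine {F : Type*} [Field F] (a d : F × F) : Set (F × F) :=
  {x : F × F | ∃ t : F, x = a + t • d}

open Finset

section
variable {F : Type*} [Field F]

lemma self_mem_affLine (a d : F × F) : a ∈ affLine a d := ⟨0, by simp⟩

lemma add_mem_affLine (a d : F × F) : a + d ∈ affLine a d := ⟨1, by simp⟩

lemma mem_affLine_one_slope {a x : F × F} {m : F} :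
    x ∈ affLine a (1, m) ↔ x.2 = a.2 + m * (x.1 - a.1) := by
  constructor
  · rintro ⟨t, rfl⟩
    simp
    ring
  · intro h
    refine ⟨x.1 - a.1, Prod.ext ?_ ?_⟩ <;> simp [h]; ring

lemma mem_affLine_vertical {c : F} {x : F × F} :
    x ∈ affLine (c, 0) (0, 1) ↔ x.1 = c := by
  constructor
  · rintro ⟨t, rfl⟩
    simp
  · intro h
    exact ⟨x.2, Prod.ext (by simp [h]) (by simp)⟩

lemma mem_affLine_one_slope_iff_of_fst_ne {a x : F × F} {m : F} (h : x.1 ≠ a.1) :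
    x ∈ affLine a (1, m) ↔ m = (x.2 - a.2) / (x.1 - a.1) := by
  rw [mem_affLine_one_slope, eq_div_iff (sub_ne_zero.2 h)]
  constructor <;> intro h' <;> linear_combination -h'

lemma affLine_one_slope_injective (a : F × F) : Function.Injective fun m : F => affLine a (1, m) :=
  fun m m' h => by
    have hm := add_mem_affLine a (1, m)
    rw [show affLine a (1, m) = affLine a (1, m') from h, mem_affLine_one_slope] at hm
    simpa using hm

lemma affLine_vertical_injective : Function.Injective fun c : F => affLine (c, 0) (0, 1) :=
  fun c c' h => by
    have hc := self_mem_affLine ((c, 0) : F × F) (0, 1)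
    rwa [show affLine (c, 0) (0, 1) = affLine (c', 0) (0, 1) from h, mem_affLine_vertical] at hc

lemma affLine_one_slope_ne_vertical (a : F × F) (m c : F) :
    affLine a (1, m) ≠ affLine (c, 0) (0, 1) := fun h => by
  have ha := self_mem_affLine a (1, m)
  have ha' := add_mem_affLine a (1, m)
  rw [h, mem_affLine_vertical] at ha ha'
  simp only [Prod.fst_add] at ha'
  exact one_ne_zero (by linear_combination ha' - ha)

variable [Fintype F] {R : Type*} [AddCommMonoidWithOne R]

lemma sum_mem_affLine_one_slope_of_fst_ne {a x : F × F} (h : x.1 ≠ a.1) :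
    (∑ m : F, if x ∈ affLine a (1, m) then (1 : R) else 0) = 1 := by
  simp_rw [mem_affLine_one_slope_iff_of_fst_ne h, sum_ite_eq', mem_univ, if_true]

lemma sum_mem_affLine_one_slope_of_fst_eq {a x : F × F} (h : x.1 = a.1) :
    (∑ m : F, if x ∈ affLine a (1, m) then (1 : R) else 0) =
      if x = a then (Fintype.card F : R) else 0 := by
  have hx : x = a ↔ x.2 = a.2 := ⟨congrArg Prod.snd, Prod.ext h⟩
  simp_rw [mem_affLine_one_slope, h, sub_self, mul_zero, add_zero, hx]
  split_ifs <;> simp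

lemma sum_mem_affLine_vertical_erase (a : F) (x : F × F) :
    (∑ c ∈ univ.erase a, if x ∈ affLine (c, 0) (0, 1) then (1 : R) else 0) =
      if x.1 = a then 0 else 1 := by
  simp_rw [mem_affLine_vertical, sum_ite_eq, mem_erase, mem_univ, and_true]
  split_ifs <;> simp_all

end

/-- In the affine plane over a finite field of odd cardinality, for every point `A` there
is a finite set of lines whose mod-2 indicator functions sum to the indicator function of
`{A}`: flipping those switches toggles exactly the bulb at `A`. -/
theorem stmt_11 {F : Type*} [Field F] [Fintype F]
    (hodd : Odd (Fintype.card F)) (A : F × F) :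
    ∃ S : Finset (Set (F × F)),
      (∀ ℓ ∈ S, ∃ a d : F × F, d ≠ 0 ∧ ℓ = affLine a d) ∧
      ∀ x : F × F,
        (∑ ℓ ∈ S, if x ∈ ℓ then (1 : ZMod 2) else 0) = if x = A then 1 else 0 := by
  have hdisj : Disjoint (univ.image fun m : F => affLine A (1, m))
      ((univ.erase A.1).image fun c : F => affLine (c, 0) (0, 1)) := by
    simp only [disjoint_left, mem_image]
    rintro _ ⟨m, -, rfl⟩ ⟨c, -, h⟩
    exact affLine_one_slope_ne_vertical A m c h.symm
  refine ⟨(univ.image fun m : F => affLine A (1, m)) ∪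
      (univ.erase A.1).image fun c : F => affLine (c, 0) (0, 1), ?_, fun x => ?_⟩
  · simp only [mem_union, mem_image]
    rintro _ (⟨m, -, rfl⟩ | ⟨c, -, rfl⟩)
    exacts [⟨A, (1, m), by simp, rfl⟩, ⟨(c, 0), (0, 1), by simp, rfl⟩]
  rw [sum_union hdisj, sum_image (affLine_one_slope_injective A).injOn,
    sum_image affLine_vertical_injective.injOn, sum_mem_affLine_vertical_erase]
  by_cases h : x.1 = A.1
  · rw [sum_mem_affLine_one_slope_of_fst_eq h, ZMod.natCast_eq_one_iff_odd.2 hodd, if_pos h,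
      add_zero]
  · rw [sum_mem_affLine_one_slope_of_fst_ne h, if_neg h, if_neg (ne_of_apply_ne Prod.fst h)]
    rfl
end

section
/- Let F be a finite field of odd cardinality and consider the affine plane with point set F × F, whose lines are the affine lines {a + t • d | t ∈ F} for a, d ∈ F × F with d ≠ 0. Then every configuration c : F × F → ZMod 2 with at least one lit bulb is reducible: there exists a finite set S of lines such that flipping all switches in S yields a configuration with strictly fewer lit bulbs than c. (Theorem 4.1) -/
open scoped Classical

section aux
variable {F : Type*} [Field F]

lemma mem_slope (p x : F × F) (m : F) :
    x ∈ affLine p (1, m) ↔ x.2 - p.2 = (x.1 - p.1) * m := by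
  constructor
  · rintro ⟨t, rfl⟩
    simp [Prod.smul_def, smul_eq_mul]
  · intro h
    refine ⟨x.1 - p.1, ?_⟩
    have : x.2 = p.2 + (x.1 - p.1) * m := by linear_combination h
    ext
    · simp
    · simp [this, smul_eq_mul]

lemma mem_vert (c0 : F) (x : F × F) :
    x ∈ affLine (c0, 0) (0, 1) ↔ x.1 = c0 := by
  constructor
  · rintro ⟨t, rfl⟩
    simp
  · intro h
    refine ⟨x.2, ?_⟩
    ext
    · simp [h]
    · simp [smul_eq_mul]
end aux

section main
variable {F : Type*} [Field F] [Fintype F]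

lemma slope_inj (p : F × F) : Function.Injective (fun m : F => affLine p (1, m)) := by
  intro m m' h
  have h1 : p + (1 : F) • ((1 : F), m) ∈ affLine p (1, m) := ⟨1, rfl⟩
  simp only at h
  rw [h, mem_slope] at h1
  simpa using h1

lemma vert_inj : Function.Injective (fun c0 : F => affLine ((c0 : F), (0 : F)) (0, 1)) := by
  intro c0 c0' h
  have h1 : ((c0 : F), (0 : F)) ∈ affLine ((c0 : F), (0 : F)) (0, 1) := ⟨0, by simp⟩
  simp only at h
  rw [h, mem_vert] at h1
  exact h1

lemma slope_ne_vert (p : F × F) (m c0 : F) :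
    affLine p (1, m) ≠ affLine ((c0 : F), (0 : F)) (0, 1) := by
  intro h
  have h1 : p ∈ affLine p (1, m) := ⟨0, by simp⟩
  have h2 : p + (1 : F) • ((1 : F), m) ∈ affLine p (1, m) := ⟨1, rfl⟩
  rw [h, mem_vert] at h1 h2
  simp at h2
  exact one_ne_zero (by linear_combination h2 - h1)

lemma count_parity (hodd : Odd (Fintype.card F)) (p x : F × F) :
    ((((Finset.univ.image (fun m : F => affLine p (1, m))) ∪
       ((Finset.univ.filter fun c0 : F => c0 ≠ p.1).image
         (fun c0 : F => affLine ((c0 : F), (0 : F)) (0, 1)))).filter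
        fun ℓ : Set (F × F) => x ∈ ℓ).card : ZMod 2)
      = if x = p then 1 else 0 := by
  classical
  set S1 : Finset (Set (F × F)) := Finset.univ.image (fun m : F => affLine p (1, m)) with hS1
  set S2 : Finset (Set (F × F)) :=
    (Finset.univ.filter fun c0 : F => c0 ≠ p.1).image
      (fun c0 : F => affLine ((c0 : F), (0 : F)) (0, 1)) with hS2
  have hdisj : Disjoint (S1.filter fun ℓ => x ∈ ℓ) (S2.filter fun ℓ => x ∈ ℓ) := by
    rw [Finset.disjoint_left]
    intro ℓ h1 h2
    simp only [Finset.mem_filter, hS1, hS2, Finset.mem_image] at h1 h2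
    obtain ⟨⟨m, _, rfl⟩, _⟩ := h1
    obtain ⟨⟨c0, _, hc0⟩, _⟩ := h2
    exact slope_ne_vert p m c0 hc0.symm
  have hcard : ((S1 ∪ S2).filter fun ℓ => x ∈ ℓ).card
      = (S1.filter fun ℓ => x ∈ ℓ).card + (S2.filter fun ℓ => x ∈ ℓ).card := by
    rw [Finset.filter_union, Finset.card_union_of_disjoint hdisj]
  have h1 : (S1.filter fun ℓ => x ∈ ℓ).card
      = (Finset.univ.filter fun m : F => x ∈ affLine p (1, m)).card := by
    rw [hS1, Finset.filter_image]
    exact Finset.card_image_of_injective _ (slope_inj p)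
  have h2 : (S2.filter fun ℓ => x ∈ ℓ).card
      = ((Finset.univ.filter fun c0 : F => c0 ≠ p.1).filter
          fun c0 : F => x ∈ affLine ((c0 : F), (0 : F)) (0, 1)).card := by
    rw [hS2, Finset.filter_image]
    exact Finset.card_image_of_injective _ vert_inj
  rw [hcard, h1, h2]
  by_cases hxp : x = p
  · subst hxp
    have e1 : (Finset.univ.filter fun m : F => x ∈ affLine x (1, m)) = Finset.univ := by
      ext m; simp [mem_slope]
    have e2 : ((Finset.univ.filter fun c0 : F => c0 ≠ x.1).filter
        fun c0 : F => x ∈ affLine ((c0 : F), (0 : F)) (0, 1)) = ∅ := by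
      ext c0
      simp only [Finset.mem_filter, Finset.mem_univ, true_and, Finset.notMem_empty,
        iff_false, mem_vert, not_and]
      intro h h'; exact h h'.symm
    rw [e1, e2]
    simp only [Finset.card_univ, Finset.card_empty, Nat.add_zero, if_pos rfl]
    have : Fintype.card F % 2 = 1 := Nat.odd_iff.mp hodd
    rw [← ZMod.natCast_mod, this]
    norm_num
  · rw [if_neg hxp]
    by_cases hx1 : x.1 = p.1
    · have hx2 : x.2 ≠ p.2 := fun h => hxp (Prod.ext hx1 h)
      have e1 : (Finset.univ.filter fun m : F => x ∈ affLine p (1, m)) = ∅ := by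
        ext m
        simp only [Finset.mem_filter, Finset.mem_univ, true_and, Finset.notMem_empty,
          iff_false, mem_slope, hx1]
        intro h
        apply hx2
        have : x.2 - p.2 = 0 := by rw [h]; ring
        linear_combination this
      have e2 : ((Finset.univ.filter fun c0 : F => c0 ≠ p.1).filter
          fun c0 : F => x ∈ affLine ((c0 : F), (0 : F)) (0, 1)) = ∅ := by
        ext c0
        simp only [Finset.mem_filter, Finset.mem_univ, true_and, Finset.notMem_empty,
          iff_false, mem_vert, not_and]
        intro h h'; exact h (hx1 ▸ h'.symm)
      rw [e1, e2]; simp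
    · have hne : x.1 - p.1 ≠ 0 := sub_ne_zero.mpr hx1
      have e1 : (Finset.univ.filter fun m : F => x ∈ affLine p (1, m))
          = {(x.2 - p.2) / (x.1 - p.1)} := by
        ext m
        simp only [Finset.mem_filter, Finset.mem_univ, true_and, Finset.mem_singleton,
          mem_slope]
        constructor
        · intro h; rw [eq_div_iff hne]; linear_combination -h
        · intro h; subst h; field_simp
      have e2 : ((Finset.univ.filter fun c0 : F => c0 ≠ p.1).filter
          fun c0 : F => x ∈ affLine ((c0 : F), (0 : F)) (0, 1)) = {x.1} := by
        ext c0
        simp only [Finset.mem_filter, Finset.mem_univ, true_and, Finset.mem_singleton,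
          mem_vert]
        constructor
        · intro h; exact h.2.symm
        · intro h; subst h; exact ⟨hx1, rfl⟩
      rw [e1, e2]
      simp only [Finset.card_singleton]
      decide

end main


/-- On the affine plane over a finite field of odd cardinality, every configuration with
at least one lit bulb is reducible: flipping some finite set of line switches strictly
decreases the number of lit bulbs. -/
theorem stmt_12 {F : Type*} [Field F] [Fintype F]
    (hodd : Odd (Fintype.card F)) (c : F × F → ZMod 2)
    (hc : 1 ≤ (Finset.univ.filter fun x : F × F => c x = 1).card) :
    ∃ S : Finset (Set (F × F)),
      (∀ ℓ ∈ S, ∃ a d : F × F, d ≠ 0 ∧ ℓ = affLine a d) ∧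
      (Finset.univ.filter fun x : F × F =>
          c x + ((S.filter fun ℓ : Set (F × F) => x ∈ ℓ).card : ZMod 2) = 1).card <
        (Finset.univ.filter fun x : F × F => c x = 1).card := by
  obtain ⟨p, hpmem⟩ := Finset.card_pos.mp (lt_of_lt_of_le Nat.one_pos hc)
  have hp : c p = 1 := (Finset.mem_filter.mp hpmem).2
  refine ⟨(Finset.univ.image (fun m : F => affLine p (1, m))) ∪
      ((Finset.univ.filter fun c0 : F => c0 ≠ p.1).image
        (fun c0 : F => affLine ((c0 : F), (0 : F)) (0, 1))), ?_, ?_⟩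
  · intro ℓ hℓ
    rw [Finset.mem_union] at hℓ
    rcases hℓ with h | h
    · obtain ⟨m, _, rfl⟩ := Finset.mem_image.mp h
      exact ⟨p, (1, m), by simp, rfl⟩
    · obtain ⟨c0, _, rfl⟩ := Finset.mem_image.mp h
      exact ⟨(c0, 0), (0, 1), by simp, rfl⟩
  · have key : (Finset.univ.filter fun x : F × F =>
        c x + ((((Finset.univ.image (fun m : F => affLine p (1, m))) ∪
          ((Finset.univ.filter fun c0 : F => c0 ≠ p.1).image
            (fun c0 : F => affLine ((c0 : F), (0 : F)) (0, 1)))).filter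
            fun ℓ : Set (F × F) => x ∈ ℓ).card : ZMod 2) = 1)
        = (Finset.univ.filter fun x : F × F => c x = 1).erase p := by
      ext x
      simp only [Finset.mem_filter, Finset.mem_univ, true_and, Finset.mem_erase]
      rw [count_parity hodd p x]
      by_cases hxp : x = p
      · subst hxp
        rw [if_pos rfl, hp]
        have h11 : (1 : ZMod 2) + 1 ≠ 1 := by decide
        simp [h11]
      · rw [if_neg hxp]
        simp [hxp]
    rw [key]
    exact Finset.card_erase_lt_of_mem hpmem
end

section
/- Let F be a finite field of odd cardinality and consider the affine plane with point set F × F, whose lines are the affine lines {a + t • d | t ∈ F} for a, d ∈ F × F with d ≠ 0. Then every configuration c : F × F → ZMod 2 can be reduced to 0 lit bulbs: there exists a finite set S of lines whose ZMod 2 indicator functions sum to c. Equivalently, the ZMod 2 span of the indicator functions of the affine lines is all of (F × F) → ZMod 2. -/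
open scoped Classical

/-!
Over `ZMod 2` the point indicator `δ_p` is a sum of line indicators: the `q` non-vertical
lines through `p` together with the vertical one cover every `x ≠ p` once and `p` itself
`q + 1 ≡ 0` times (as `q` is odd), so they sum to `1 - δ_p = 1 + δ_p`; adding the `q`
horizontal lines, which sum to `1`, leaves `δ_p`. Hence the line indicators span, and a
`ZMod 2`-combination is just a sum over its support.
-/

open Finset

theorem exists_finset_sum_indicator_eq_of_mem_span {α : Type*} {𝓛 : Set (Set α)}
    {f : α → ZMod 2} (hf : f ∈ Submodule.span (ZMod 2) ((·.indicator 1) '' 𝓛)) :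
    ∃ S : Finset (Set α), ↑S ⊆ 𝓛 ∧ ∑ ℓ ∈ S, ℓ.indicator 1 = f := by
  obtain ⟨l, hl, rfl⟩ := (Finsupp.mem_span_image_iff_linearCombination (ZMod 2)).1 hf
  refine ⟨l.support, hl, ?_⟩
  rw [Finsupp.linearCombination_apply, Finsupp.sum]
  refine sum_congr rfl fun ℓ hℓ => ?_
  have hℓ1 : l ℓ = 1 := (by decide : ∀ a : ZMod 2, a ≠ 0 → a = 1) _ (Finsupp.mem_support_iff.1 hℓ)
  rw [hℓ1, one_smul]

section AffinePlane

variable {F : Type*} [Field F]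

variable (F) in
def affLines : Set (Set (F × F)) :=
  {ℓ | ∃ a d : F × F, d ≠ 0 ∧ ℓ = affLine a d}

theorem mem_affLine_one_iff {p x : F × F} {m : F} :
    x ∈ affLine p (1, m) ↔ x.2 - p.2 = m * (x.1 - p.1) := by
  constructor
  · rintro ⟨t, rfl⟩
    simp only [Prod.fst_add, Prod.snd_add, Prod.smul_fst, Prod.smul_snd, smul_eq_mul]
    ring
  · intro h
    refine ⟨x.1 - p.1, Prod.ext (by simp) ?_⟩
    simp only [Prod.snd_add, Prod.smul_snd, smul_eq_mul]
    linear_combination h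

theorem mem_affLine_zero_one_iff {p x : F × F} : x ∈ affLine p (0, 1) ↔ x.1 = p.1 := by
  constructor
  · rintro ⟨t, rfl⟩
    simp
  · intro h
    exact ⟨x.2 - p.2, Prod.ext (by simp [h]) (by simp)⟩

variable [Fintype F]

theorem sum_indicator_affLine_horizontal :
    ∑ b : F, (affLine (0, b) ((1 : F), 0)).indicator (1 : F × F → ZMod 2) = 1 := by
  funext x
  simp [Set.indicator_apply, mem_affLine_one_iff, sub_eq_zero]

theorem sum_ite_eq_mul_of_odd_card (hodd : Odd (Fintype.card F)) (a b : F) :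
    (∑ m : F, if a = m * b then (1 : ZMod 2) else 0) =
      if b = 0 then (if a = 0 then 1 else 0) else 1 := by
  by_cases hb : b = 0
  · simp [hb, ZMod.natCast_eq_one_iff_odd.2 hodd]
  · have hm (m : F) : a = m * b ↔ m = a / b := by rw [eq_div_iff hb, eq_comm]
    simp [hb, hm]

theorem pi_single_eq_sum_indicator_affLine (hodd : Odd (Fintype.card F)) (p : F × F) :
    Pi.single (M := fun _ => ZMod 2) p 1 =
      ∑ m : F, (affLine p (1, m)).indicator 1 + (affLine p (0, 1)).indicator 1 +
        ∑ b : F, (affLine (0, b) ((1 : F), 0)).indicator 1 := by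
  rw [sum_indicator_affLine_horizontal]
  funext x
  simp only [Pi.add_apply, Finset.sum_apply, Set.indicator_apply, mem_affLine_one_iff,
    mem_affLine_zero_one_iff, Pi.one_apply, Pi.single_apply, sum_ite_eq_mul_of_odd_card hodd,
    sub_eq_zero, Prod.ext_iff]
  by_cases h1 : x.1 = p.1 <;> by_cases h2 : x.2 = p.2 <;> simp only [h1, h2] <;> decide

theorem span_indicator_affLines_eq_top (hodd : Odd (Fintype.card F)) :
    Submodule.span (ZMod 2) ((·.indicator (1 : F × F → ZMod 2)) '' affLines F) = ⊤ := by
  have line_mem (a d : F × F) (hd : d ≠ 0) :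
      (affLine a d).indicator 1 ∈
        Submodule.span (ZMod 2) ((·.indicator (1 : F × F → ZMod 2)) '' affLines F) :=
    Submodule.subset_span ⟨_, ⟨a, d, hd, rfl⟩, rfl⟩
  rw [eq_top_iff, ← (Pi.basisFun (ZMod 2) (F × F)).span_eq, Submodule.span_le]
  rintro _ ⟨p, rfl⟩
  rw [Pi.basisFun_apply, pi_single_eq_sum_indicator_affLine hodd p]
  refine add_mem (add_mem ?_ (line_mem _ _ (by simp))) ?_ <;>
    exact sum_mem fun _ _ => line_mem _ _ (by simp)

end AffinePlane

/-- On the affine plane over a finite field of odd cardinality, every configuration can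
be reduced to zero lit bulbs: there is a finite set of lines whose mod-2 indicator
functions sum to the configuration. -/
theorem stmt_13 {F : Type*} [Field F] [Fintype F]
    (hodd : Odd (Fintype.card F)) (c : F × F → ZMod 2) :
    ∃ S : Finset (Set (F × F)),
      (∀ ℓ ∈ S, ∃ a d : F × F, d ≠ 0 ∧ ℓ = affLine a d) ∧
      ∀ x : F × F, (∑ ℓ ∈ S, if x ∈ ℓ then (1 : ZMod 2) else 0) = c x := by
  have hc : c ∈ Submodule.span (ZMod 2) ((·.indicator 1) '' affLines F) :=
    span_indicator_affLines_eq_top hodd ▸ Submodule.mem_top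
  obtain ⟨S, hS, hsum⟩ := exists_finset_sum_indicator_eq_of_mem_span hc
  refine ⟨S, hS, fun x => ?_⟩
  simpa [Set.indicator_apply] using congrFun hsum x
end

section
/- Let F be a finite field of odd cardinality q and let n ≥ 2 be an even integer. Consider the projective space PG(n, F) whose points are the elements of the projectivization ℙ(F, F^{n+1}) (one-dimensional subspaces of F^{n+1}) and whose lines are the point sets of two-dimensional subspaces of F^{n+1}. Then for any two distinct points A and B there exists a finite set S of lines such that the sum over ZMod 2 of the indicator functions of the lines in S equals the indicator function of {A, B}; consequently every configuration on PG(n, F) with at least 2 lit bulbs is reducible, and every configuration with an even number of lit bulbs can be reduced to 0 lit bulbs. (Section 6: the results extend to projective spaces of even dimension) -/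
open scoped Classical LinearAlgebra.Projectivization

/-- A line of the projective space `PG(n, F)`: the set of points (one-dimensional
subspaces) contained in a fixed two-dimensional subspace `W` of `F^{n+1}`. -/
def projLine {F : Type*} [Field F] {n : ℕ} (W : Submodule F (Fin (n + 1) → F)) :
    Set (ℙ F (Fin (n + 1) → F)) :=
  {p : ℙ F (Fin (n + 1) → F) | p.submodule ≤ W}

/-!
Every point of `PG(n, F)` lies on an even number of lines: the lines through a point `a` are
the points of `ℙ(F^{n+1}/a)`, and there are `1 + q + ⋯ + q^(n-1) ≡ n ≡ 0 (mod 2)` of them.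
Hence `A` and `B` are the only points on an odd number of lines of the symmetric difference
of the pencils through `A` and through `B`: a point `x ∉ {A, B}` lies on one line through `A` and
one through `B`, while `A` lies on one line through `B` and on evenly many through itself.
Since flipping `S` and then `T` amounts to flipping `S ∆ T`, lit bulbs can be switched off
two at a time.
-/

open Module Finset
open scoped symmDiff

theorem Finset.sum_symmDiff_of_charP_two {ι R : Type*} [DecidableEq ι] [CommSemiring R]
    [CharP R 2] (s t : Finset ι) (f : ι → R) :
    ∑ i ∈ s ∆ t, f i = ∑ i ∈ s, f i + ∑ i ∈ t, f i := by
  have hunion : s ∪ t = s ∆ t ∪ s ∩ t := (symmDiff_sup_inf s t).symm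
  have hdisj : Disjoint (s ∆ t) (s ∩ t) := disjoint_symmDiff_inf s t
  rw [← sum_union_inter, hunion, sum_union hdisj, add_assoc,
    CharTwo.add_self_eq_zero, add_zero]

theorem Finset.natCast_card_filter_symmDiff {ι : Type*} [DecidableEq ι] (s t : Finset ι)
    (p : ι → Prop) [DecidablePred p] :
    (((s ∆ t).filter p).card : ZMod 2) = (s.filter p).card + (t.filter p).card := by
  simp only [← sum_boole, sum_symmDiff_of_charP_two]

section Reduction

variable {P : Type*} (IsLine : Set P → Prop)

def FlipsPairs : Prop :=
  ∀ A B : P, A ≠ B → ∃ S : Finset (Set P), (∀ ℓ ∈ S, IsLine ℓ) ∧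
    ∀ x, ((S.filter fun ℓ => x ∈ ℓ).card : ZMod 2) = if x = A ∨ x = B then 1 else 0

variable {IsLine}

theorem FlipsPairs.exists_setOf_eq_sdiff (h : FlipsPairs IsLine) (c : P → ZMod 2) {A B : P}
    (hAB : A ≠ B) (hA : c A = 1) (hB : c B = 1) :
    ∃ S : Finset (Set P), (∀ ℓ ∈ S, IsLine ℓ) ∧
      {x | c x + ((S.filter fun ℓ => x ∈ ℓ).card : ZMod 2) = 1} = {x | c x = 1} \ {A, B} := by
  obtain ⟨S, hS, hflip⟩ := h A B hAB
  refine ⟨S, hS, Set.ext fun x => ?_⟩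
  simp only [Set.mem_ofPred_eq, Set.mem_sdiff, Set.mem_insert_iff, Set.mem_singleton_iff, hflip]
  by_cases hx : x = A ∨ x = B
  · rcases hx with rfl | rfl <;> simp [hA, hB]
  · simp [hx]

theorem FlipsPairs.exists_ncard_lt [Finite P] (h : FlipsPairs IsLine) (c : P → ZMod 2)
    (hc : 2 ≤ {x | c x = 1}.ncard) :
    ∃ S : Finset (Set P), (∀ ℓ ∈ S, IsLine ℓ) ∧
      {x | c x + ((S.filter fun ℓ => x ∈ ℓ).card : ZMod 2) = 1}.ncard <
        {x | c x = 1}.ncard := by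
  obtain ⟨A, B, hA, hB, hAB⟩ := (Set.one_lt_ncard_iff).1 hc
  obtain ⟨S, hS, hset⟩ := h.exists_setOf_eq_sdiff c hAB hA hB
  refine ⟨S, hS, hset ▸ Set.ncard_lt_ncard (Set.sdiff_subset.ssubset_of_ne fun heq => ?_)⟩
  have hA' : A ∈ {x | c x = 1} \ {A, B} := heq.symm ▸ hA
  simp at hA'

theorem FlipsPairs.exists_eq_zero [Finite P] (h : FlipsPairs IsLine) (c : P → ZMod 2)
    (hc : Even {x | c x = 1}.ncard) :
    ∃ S : Finset (Set P), (∀ ℓ ∈ S, IsLine ℓ) ∧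
      ∀ x, c x + ((S.filter fun ℓ => x ∈ ℓ).card : ZMod 2) = 0 := by
  induction hk : {x | c x = 1}.ncard using Nat.strong_induction_on generalizing c with
  | _ k ih =>
    rcases Nat.lt_or_ge k 2 with hk2 | hk2
    · have hempty : {x | c x = 1} = ∅ :=
        (Set.ncard_eq_zero).1 (by obtain ⟨r, hr⟩ := hc; omega)
      refine ⟨∅, by simp, fun x => ?_⟩
      have hx : c x ≠ 1 := fun hx => Set.eq_empty_iff_forall_notMem.1 hempty x hx
      simpa using (by decide : ∀ z : ZMod 2, z ≠ 1 → z = 0) _ hx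
    · obtain ⟨A, B, hA, hB, hAB⟩ := (Set.one_lt_ncard_iff).1 (hk ▸ hk2 : 1 < _)
      obtain ⟨S₁, hS₁, hset⟩ := h.exists_setOf_eq_sdiff c hAB hA hB
      have hk' :
          {x | c x + ((S₁.filter fun ℓ => x ∈ ℓ).card : ZMod 2) = 1}.ncard = k - 2 := by
        rw [hset, Set.ncard_sdiff (Set.pair_subset hA hB), Set.ncard_pair hAB, hk]
      obtain ⟨S₂, hS₂, hzero⟩ :=
        ih (k - 2) (by omega) _ (by rw [hk', ← hk]; exact hc.tsub even_two) hk'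
      refine ⟨S₁ ∆ S₂, fun ℓ hℓ => ?_, fun x => ?_⟩
      · rcases mem_symmDiff.1 hℓ with ⟨hℓ, -⟩ | ⟨hℓ, -⟩
        exacts [hS₁ ℓ hℓ, hS₂ ℓ hℓ]
      · rw [natCast_card_filter_symmDiff, ← add_assoc]
        exact hzero x

end Reduction

theorem Projectivization.even_natCard {F V : Type*} [Field F] [Finite F] [AddCommGroup V]
    [Module F V] (hq : Odd (Nat.card F)) (hV : Even (finrank F V)) : Even (Nat.card (ℙ F V)) := by
  rw [Projectivization.card_of_finrank F V rfl, ← ZMod.natCast_eq_zero_iff_even]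
  push_cast
  simp [ZMod.natCast_eq_one_iff_odd.2 hq, ZMod.natCast_eq_zero_iff_even.2 hV]

namespace Submodule

variable {F V : Type*} [Field F] [AddCommGroup V] [Module F V] [FiniteDimensional F V]
  {a b W : Submodule F V}

theorem inf_eq_bot_of_finrank_eq_one (ha : finrank F a = 1) (hb : finrank F b = 1)
    (hab : a ≠ b) : a ⊓ b = ⊥ := by
  have hlt : a ⊓ b < a := inf_le_left.lt_of_ne fun h =>
    hab (eq_of_le_of_finrank_eq (h ▸ inf_le_right) (by rw [ha, hb]))
  have := finrank_lt_finrank_of_lt hlt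
  exact finrank_eq_zero.1 (by omega)

theorem finrank_sup_eq_two (ha : finrank F a = 1) (hb : finrank F b = 1) (hab : a ≠ b) :
    finrank F (a ⊔ b : Submodule F V) = 2 := by
  have := finrank_sup_add_finrank_inf_eq a b
  rw [inf_eq_bot_of_finrank_eq_one ha hb hab, finrank_bot, ha, hb] at this
  omega

theorem eq_sup_of_finrank_eq_two (hW : finrank F W = 2) (ha : finrank F a = 1)
    (hb : finrank F b = 1) (hab : a ≠ b) (haW : a ≤ W) (hbW : b ≤ W) : W = a ⊔ b :=
  (eq_of_le_of_finrank_eq (sup_le haW hbW) (by rw [hW, finrank_sup_eq_two ha hb hab])).symm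

theorem finrank_map_mkQ_add_finrank (haW : a ≤ W) :
    finrank F (W.map a.mkQ) + finrank F a = finrank F W := by
  have := (a.mkQ.domRestrict W).finrank_range_add_finrank_ker
  rwa [LinearMap.range_domRestrict, LinearMap.ker_domRestrict, ker_mkQ,
    (comapSubtypeEquivOfLe haW).finrank_eq] at this

theorem natCard_superspace_finrank_eq_add (a : Submodule F V) (k : ℕ) :
    Nat.card {W : Submodule F V // a ≤ W ∧ finrank F W = finrank F a + k} =
      Nat.card {d : Submodule F (V ⧸ a) // finrank F d = k} := by
  refine Nat.card_congr
    { toFun := fun W => ⟨W.1.map a.mkQ, ?_⟩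
      invFun := fun d => ⟨d.1.comap a.mkQ, le_comap_mkQ a d.1, ?_⟩
      left_inv := fun W => Subtype.ext ?_
      right_inv := fun d => Subtype.ext (map_comap_eq_of_surjective a.mkQ_surjective d.1) }
  · have := finrank_map_mkQ_add_finrank W.2.1
    omega
  · have := finrank_map_mkQ_add_finrank (le_comap_mkQ a d.1)
    rw [map_comap_eq_of_surjective a.mkQ_surjective, d.2] at this
    omega
  · exact (comap_map_mkQ a W.1).trans (sup_eq_right.2 W.2.1)

instance [Finite F] : Finite (Submodule F V) :=
  have : Finite V := Module.finite_of_finite F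
  .of_injective _ SetLike.coe_injective

noncomputable def pencil [Finite F] (a : Submodule F V) : Finset (Submodule F V) :=
  (Set.toFinite {W : Submodule F V | a ≤ W ∧ finrank F W = 2}).toFinset

@[simp]
theorem mem_pencil [Finite F] : W ∈ pencil a ↔ a ≤ W ∧ finrank F W = 2 := by
  simp [pencil]

theorem filter_pencil_of_ne [Finite F] (ha : finrank F a = 1) (hb : finrank F b = 1)
    (hab : a ≠ b) : (pencil a).filter (b ≤ ·) = {a ⊔ b} := by
  ext W
  simp only [mem_filter, mem_pencil, mem_singleton]
  constructor
  · rintro ⟨⟨haW, hW⟩, hbW⟩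
    exact eq_sup_of_finrank_eq_two hW ha hb hab haW hbW
  · rintro rfl
    exact ⟨⟨le_sup_left, finrank_sup_eq_two ha hb hab⟩, le_sup_right⟩

theorem even_card_pencil [Finite F] (hq : Odd (Nat.card F)) (hV : Odd (finrank F V))
    (ha : finrank F a = 1) : Even (pencil a).card := by
  have hquot : finrank F (V ⧸ a) + 1 = finrank F V := ha ▸ a.finrank_quotient_add_finrank
  have hcard : (pencil a).card = Nat.card (ℙ F (V ⧸ a)) := by
    rw [Nat.card_congr (Projectivization.equivSubmodule F (V ⧸ a)),
      ← natCard_superspace_finrank_eq_add, ha]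
    exact (Nat.card_eq_card_finite_toFinset _).symm
  have hquot_even : Even (finrank F (V ⧸ a)) := by
    obtain ⟨k, hk⟩ := hV
    exact ⟨k, by omega⟩
  exact hcard ▸ Projectivization.even_natCard hq hquot_even

end Submodule

namespace Projectivization

variable {F V : Type*} [Field F] [Finite F] [AddCommGroup V] [Module F V] [FiniteDimensional F V]

open Submodule

theorem natCast_card_filter_pencil (hq : Odd (Nat.card F)) (hV : Odd (finrank F V))
    (p x : ℙ F V) :
    (((pencil p.submodule).filter (x.submodule ≤ ·)).card : ZMod 2) =
      if p = x then 0 else 1 := by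
  split_ifs with hpx
  · subst hpx
    rw [filter_true_of_mem fun W hW => (mem_pencil.1 hW).1, ZMod.natCast_eq_zero_iff_even]
    exact even_card_pencil hq hV p.finrank_submodule
  · rw [filter_pencil_of_ne p.finrank_submodule x.finrank_submodule
      (submodule_injective.ne hpx), card_singleton, Nat.cast_one]

theorem natCast_card_filter_symmDiff_pencil (hq : Odd (Nat.card F)) (hV : Odd (finrank F V))
    {A B : ℙ F V} (hAB : A ≠ B) (x : ℙ F V) :
    (((pencil A.submodule ∆ pencil B.submodule).filter (x.submodule ≤ ·)).card
      : ZMod 2) = if x = A ∨ x = B then 1 else 0 := by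
  rw [natCast_card_filter_symmDiff, natCast_card_filter_pencil hq hV,
    natCast_card_filter_pencil hq hV]
  rcases eq_or_ne x A with rfl | hxA
  · simp [hAB.symm]
  rcases eq_or_ne x B with rfl | hxB
  · simp [hxA.symm]
  rw [if_neg hxA.symm, if_neg hxB.symm, if_neg (not_or.2 ⟨hxA, hxB⟩)]
  decide

end Projectivization

section ProjLine

variable {F : Type*} [Field F] {n : ℕ}

theorem mk_mem_projLine {v : Fin (n + 1) → F} (hv : v ≠ 0)
    (W : Submodule F (Fin (n + 1) → F)) :
    Projectivization.mk F v hv ∈ projLine W ↔ v ∈ W := by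
  simp [projLine, Projectivization.submodule_mk, Submodule.span_singleton_le_iff_mem]

theorem projLine_injective : Function.Injective (projLine (F := F) (n := n)) := by
  have hle : ∀ {W₁ W₂ : Submodule F (Fin (n + 1) → F)},
      projLine W₁ = projLine W₂ → W₁ ≤ W₂ := by
    intro W₁ W₂ h v hv
    by_cases hv0 : v = 0
    · exact hv0 ▸ W₂.zero_mem
    · rw [← mk_mem_projLine hv0, ← h, mk_mem_projLine]
      exact hv
  exact fun W₁ W₂ h => le_antisymm (hle h) (hle h.symm)

theorem flipsPairs_projLine [Fintype F] (hq : Odd (Fintype.card F)) (hn : Even n) :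
    FlipsPairs fun ℓ : Set (ℙ F (Fin (n + 1) → F)) =>
      ∃ W : Submodule F (Fin (n + 1) → F), finrank F W = 2 ∧ ℓ = projLine W := by
  rw [← Nat.card_eq_fintype_card] at hq
  have hV : Odd (finrank F (Fin (n + 1) → F)) := by
    rw [finrank_fin_fun]
    exact hn.add_one
  intro A B hAB
  refine ⟨(Submodule.pencil A.submodule ∆ Submodule.pencil B.submodule).image projLine,
    ?_, fun x => ?_⟩
  · simp only [mem_image]
    rintro ℓ ⟨W, hW, rfl⟩
    rcases mem_symmDiff.1 hW with ⟨hW, -⟩ | ⟨hW, -⟩ <;>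
      exact ⟨W, (Submodule.mem_pencil.1 hW).2, rfl⟩
  · rw [filter_image, card_image_of_injective _ projLine_injective]
    exact Projectivization.natCast_card_filter_symmDiff_pencil hq hV hAB x

end ProjLine

theorem stmt_14_general {F : Type*} [Field F] [Fintype F]
    (hodd : Odd (Fintype.card F)) (n : ℕ) (hne : Even n) :
    (∀ A B : ℙ F (Fin (n + 1) → F), A ≠ B →
      ∃ S : Finset (Set (ℙ F (Fin (n + 1) → F))),
        (∀ ℓ ∈ S, ∃ W : Submodule F (Fin (n + 1) → F),
          Module.finrank F W = 2 ∧ ℓ = projLine W) ∧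
        ∀ x : ℙ F (Fin (n + 1) → F),
          (∑ ℓ ∈ S, if x ∈ ℓ then (1 : ZMod 2) else 0) =
            if x = A ∨ x = B then 1 else 0) ∧
    (∀ c : ℙ F (Fin (n + 1) → F) → ZMod 2,
      2 ≤ Nat.card {x : ℙ F (Fin (n + 1) → F) | c x = 1} →
      ∃ S : Finset (Set (ℙ F (Fin (n + 1) → F))),
        (∀ ℓ ∈ S, ∃ W : Submodule F (Fin (n + 1) → F),
          Module.finrank F W = 2 ∧ ℓ = projLine W) ∧
        Nat.card {x : ℙ F (Fin (n + 1) → F) |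
            c x + ((S.filter fun ℓ => x ∈ ℓ).card : ZMod 2) = 1} <
          Nat.card {x : ℙ F (Fin (n + 1) → F) | c x = 1}) ∧
    (∀ c : ℙ F (Fin (n + 1) → F) → ZMod 2,
      Even (Nat.card {x : ℙ F (Fin (n + 1) → F) | c x = 1}) →
      ∃ S : Finset (Set (ℙ F (Fin (n + 1) → F))),
        (∀ ℓ ∈ S, ∃ W : Submodule F (Fin (n + 1) → F),
          Module.finrank F W = 2 ∧ ℓ = projLine W) ∧
        ∀ x : ℙ F (Fin (n + 1) → F),
          c x + ((S.filter fun ℓ => x ∈ ℓ).card : ZMod 2) = 0) := by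
  have h := flipsPairs_projLine hodd hne
  refine ⟨fun A B hAB => ?_, fun c hc => ?_, fun c hc => ?_⟩
  · obtain ⟨S, hS, hflip⟩ := h A B hAB
    exact ⟨S, hS, fun x => by rw [sum_boole]; exact hflip x⟩
  · simp only [Nat.card_coe_set_eq] at hc ⊢
    exact h.exists_ncard_lt c hc
  · rw [Nat.card_coe_set_eq] at hc
    exact h.exists_eq_zero c hc

/-- In the projective space `PG(n, F)` with `F` of odd cardinality and `n ≥ 2` even:
any two distinct points `A, B` admit a finite set of lines whose mod-2 indicator
functions sum to the indicator of `{A, B}`; consequently every configuration with at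
least 2 lit bulbs is reducible, and every configuration with an even number of lit bulbs
can be reduced to 0 lit bulbs. -/
theorem stmt_14 {F : Type*} [Field F] [Fintype F]
    (hodd : Odd (Fintype.card F)) (n : ℕ) (hn : 2 ≤ n) (hne : Even n) :
    (∀ A B : ℙ F (Fin (n + 1) → F), A ≠ B →
      ∃ S : Finset (Set (ℙ F (Fin (n + 1) → F))),
        (∀ ℓ ∈ S, ∃ W : Submodule F (Fin (n + 1) → F),
          Module.finrank F W = 2 ∧ ℓ = projLine W) ∧
        ∀ x : ℙ F (Fin (n + 1) → F),
          (∑ ℓ ∈ S, if x ∈ ℓ then (1 : ZMod 2) else 0) =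
            if x = A ∨ x = B then 1 else 0) ∧
    (∀ c : ℙ F (Fin (n + 1) → F) → ZMod 2,
      2 ≤ Nat.card {x : ℙ F (Fin (n + 1) → F) | c x = 1} →
      ∃ S : Finset (Set (ℙ F (Fin (n + 1) → F))),
        (∀ ℓ ∈ S, ∃ W : Submodule F (Fin (n + 1) → F),
          Module.finrank F W = 2 ∧ ℓ = projLine W) ∧
        Nat.card {x : ℙ F (Fin (n + 1) → F) |
            c x + ((S.filter fun ℓ => x ∈ ℓ).card : ZMod 2) = 1} <
          Nat.card {x : ℙ F (Fin (n + 1) → F) | c x = 1}) ∧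
    (∀ c : ℙ F (Fin (n + 1) → F) → ZMod 2,
      Even (Nat.card {x : ℙ F (Fin (n + 1) → F) | c x = 1}) →
      ∃ S : Finset (Set (ℙ F (Fin (n + 1) → F))),
        (∀ ℓ ∈ S, ∃ W : Submodule F (Fin (n + 1) → F),
          Module.finrank F W = 2 ∧ ℓ = projLine W) ∧
        ∀ x : ℙ F (Fin (n + 1) → F),
          c x + ((S.filter fun ℓ => x ∈ ℓ).card : ZMod 2) = 0) :=
  stmt_14_general hodd n hne
end

section
/- Let F be a finite field of odd cardinality q and let n ≥ 2 be an even integer. Consider the projective space PG(n, F) whose points are the elements of the projectivization ℙ(F, F^{n+1}) and whose lines are the point sets of two-dimensional subspaces of F^{n+1}. Then for every configuration c and every finite set S of lines, the number of lit bulbs of the configuration obtained by flipping the switches in S is congruent modulo 2 to the number of lit bulbs of c; in particular a configuration with exactly one lit bulb is irreducible. (Section 6: the parity lemma extends to projective spaces) -/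
open scoped Classical LinearAlgebra.Projectivization

open Projectivization in
lemma aux_card_nonzero (F V : Type*) [Field F] [Fintype F] [AddCommGroup V] [Module F V]
    [Finite V] :
    Nat.card {v : V // v ≠ 0} = Nat.card (ℙ F V) * (Fintype.card F - 1) := by
  have e1 : {v : V // v ≠ 0} ≃ Σ p : ℙ F V, {v : {v : V // v ≠ 0} // Projectivization.mk' F v = p} :=
    (Equiv.sigmaFiberEquiv _).symm
  have e2 : ∀ p : ℙ F V, {v : {v : V // v ≠ 0} // Projectivization.mk' F v = p} ≃ Fˣ := by
    intro p
    have hg : Function.Bijective (fun u : Fˣ =>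
        (⟨⟨(u : F) • p.rep, smul_ne_zero u.ne_zero p.rep_nonzero⟩, by
          show Projectivization.mk F ((u : F) • p.rep) _ = p
          conv_rhs => rw [← p.mk_rep]
          rw [Projectivization.mk_eq_mk_iff]
          exact ⟨u, rfl⟩⟩ :
          {v : {v : V // v ≠ 0} // Projectivization.mk' F v = p})) := by
      constructor
      · intro u u' h
        have := congrArg (fun x => x.1.1) h
        exact Units.ext (smul_left_injective F p.rep_nonzero this)
      · rintro ⟨⟨v, hv⟩, hmk⟩
        have hmk' : Projectivization.mk F v hv = p := hmk
        rw [← p.mk_rep, Projectivization.mk_eq_mk_iff] at hmk'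
        obtain ⟨a, ha⟩ := hmk'
        exact ⟨a, Subtype.ext (Subtype.ext (by simpa [Units.smul_def] using ha))⟩
    exact (Equiv.ofBijective _ hg).symm
  calc Nat.card {v : V // v ≠ 0}
      = Nat.card (ℙ F V × Fˣ) := Nat.card_congr
        (e1.trans ((Equiv.sigmaCongrRight e2).trans (Equiv.sigmaEquivProd _ _)))
    _ = Nat.card (ℙ F V) * (Fintype.card F - 1) := by
        rw [Nat.card_prod]; congr 1
        rw [Nat.card_eq_fintype_card, Fintype.card_units]

lemma aux_card_proj (F V : Type*) [Field F] [Fintype F] [AddCommGroup V] [Module F V]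
    [Finite V] (hW : Module.finrank F V = 2) :
    Nat.card (ℙ F V) = Fintype.card F + 1 := by
  have hq2 : 2 ≤ Fintype.card F := Fintype.one_lt_card
  have hcardV : Nat.card V = Fintype.card F ^ 2 := by
    haveI : Fintype V := Fintype.ofFinite V
    rw [Nat.card_eq_fintype_card, Module.card_eq_pow_finrank (K := F), hW]
  have hnz : Nat.card {v : V // v ≠ 0} = Fintype.card F ^ 2 - 1 := by
    haveI : Fintype V := Fintype.ofFinite V
    rw [Nat.card_eq_fintype_card]
    rw [Nat.card_eq_fintype_card] at hcardV
    rw [← hcardV]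
    have := Fintype.card_subtype_compl (fun v : V => v = 0)
    simpa [Fintype.card_subtype_eq] using this
  have h := aux_card_nonzero F V
  rw [hnz] at h
  obtain ⟨k, hk⟩ : ∃ k, Fintype.card F = k + 1 := ⟨Fintype.card F - 1, by omega⟩
  rw [hk] at h hq2 ⊢
  have hk1 : 1 ≤ k := by omega
  simp only [Nat.add_sub_cancel] at h
  have hsq : (k + 1) ^ 2 = k * k + 2 * k + 1 := by ring
  have hkk : (k + 2) * k = k * k + 2 * k := by ring
  have h2 : Nat.card (ℙ F V) * k = (k + 2) * k := by omega
  have := Nat.eq_of_mul_eq_mul_right hk1 h2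
  omega

lemma aux_line_card {F : Type*} [Field F] [Fintype F] {n : ℕ}
    (W : Submodule F (Fin (n + 1) → F)) (hW : Module.finrank F W = 2) :
    Nat.card (projLine W) = Fintype.card F + 1 := by
  have hmem : ∀ p : ℙ F W,
      Projectivization.map W.subtype W.injective_subtype p ∈ projLine W := by
    intro p
    induction p using Projectivization.ind with
    | h v hv =>
      rw [Projectivization.map_mk]
      show (Projectivization.mk F (W.subtype v) _).submodule ≤ W
      rw [Projectivization.submodule_mk, Submodule.span_singleton_le_iff_mem]
      exact v.2
  have hbij : Function.Bijective
      (fun p : ℙ F W =>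
        (⟨Projectivization.map W.subtype W.injective_subtype p, hmem p⟩ : projLine W)) := by
    constructor
    · intro p p' h
      exact Projectivization.map_injective W.subtype W.injective_subtype
        (congrArg Subtype.val h)
    · rintro ⟨q, hq⟩
      induction q using Projectivization.ind with
      | h w hw =>
        have hq' : Submodule.span F {w} ≤ W := by
          rw [← Projectivization.submodule_mk w hw]; exact hq
        have hwW : w ∈ W := hq' (Submodule.mem_span_singleton_self w)
        have hne : (⟨w, hwW⟩ : W) ≠ 0 := by
          simpa [Submodule.mk_eq_zero] using hw
        refine ⟨Projectivization.mk F (⟨w, hwW⟩ : W) hne, ?_⟩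
        apply Subtype.ext
        show Projectivization.map W.subtype W.injective_subtype
          (Projectivization.mk F (⟨w, hwW⟩ : W) hne) = Projectivization.mk F w hw
        rw [Projectivization.map_mk]
        rfl
  rw [← Nat.card_congr (Equiv.ofBijective _ hbij)]
  exact aux_card_proj F W hW

lemma aux_key {X : Type*} [Fintype X] (f : X → ZMod 2) :
    (Nat.card {x : X | f x = 1} : ZMod 2) = ∑ x, f x := by
  classical
  have h1 : Nat.card {x : X | f x = 1} = (Finset.univ.filter fun x => f x = 1).card := by
    rw [Nat.card_eq_fintype_card]
    exact Fintype.card_subtype _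
  rw [h1, ← Finset.sum_boole]
  refine Finset.sum_congr rfl fun x _ => ?_
  have h01 : ∀ a : ZMod 2, a = 0 ∨ a = 1 := by decide
  rcases h01 (f x) with h | h <;> simp [h]

/-- In the projective space `PG(n, F)` with `F` of odd cardinality and `n ≥ 2` even,
flipping any finite set of line switches preserves the parity of the number of lit
bulbs; in particular a configuration with exactly one lit bulb is irreducible. -/
theorem stmt_15 {F : Type*} [Field F] [Fintype F]
    (hodd : Odd (Fintype.card F)) (n : ℕ) (hn : 2 ≤ n) (hne : Even n) :
    (∀ (c : ℙ F (Fin (n + 1) → F) → ZMod 2)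
        (S : Finset (Set (ℙ F (Fin (n + 1) → F)))),
      (∀ ℓ ∈ S, ∃ W : Submodule F (Fin (n + 1) → F),
        Module.finrank F W = 2 ∧ ℓ = projLine W) →
      Nat.card {x : ℙ F (Fin (n + 1) → F) |
          c x + ((S.filter fun ℓ => x ∈ ℓ).card : ZMod 2) = 1} ≡
        Nat.card {x : ℙ F (Fin (n + 1) → F) | c x = 1} [MOD 2]) ∧
    (∀ c : ℙ F (Fin (n + 1) → F) → ZMod 2,
      Nat.card {x : ℙ F (Fin (n + 1) → F) | c x = 1} = 1 →
      ¬ ∃ S : Finset (Set (ℙ F (Fin (n + 1) → F))),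
        (∀ ℓ ∈ S, ∃ W : Submodule F (Fin (n + 1) → F),
          Module.finrank F W = 2 ∧ ℓ = projLine W) ∧
        Nat.card {x : ℙ F (Fin (n + 1) → F) |
            c x + ((S.filter fun ℓ => x ∈ ℓ).card : ZMod 2) = 1} <
          Nat.card {x : ℙ F (Fin (n + 1) → F) | c x = 1}) := by
  haveI : Finite (ℙ F (Fin (n + 1) → F)) := Quotient.finite _
  haveI : Fintype (ℙ F (Fin (n + 1) → F)) := Fintype.ofFinite _
  have parity : ∀ (c : ℙ F (Fin (n + 1) → F) → ZMod 2)
      (S : Finset (Set (ℙ F (Fin (n + 1) → F)))),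
      (∀ ℓ ∈ S, ∃ W : Submodule F (Fin (n + 1) → F),
        Module.finrank F W = 2 ∧ ℓ = projLine W) →
      Nat.card {x : ℙ F (Fin (n + 1) → F) |
          c x + ((S.filter fun ℓ => x ∈ ℓ).card : ZMod 2) = 1} ≡
        Nat.card {x : ℙ F (Fin (n + 1) → F) | c x = 1} [MOD 2] := by
    intro c S hS
    rw [← ZMod.natCast_eq_natCast_iff]
    have hflip : ∑ x : ℙ F (Fin (n + 1) → F),
        ((S.filter fun ℓ => x ∈ ℓ).card : ZMod 2) = 0 := by
      have step1 : ∀ x : ℙ F (Fin (n + 1) → F),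
          ((S.filter fun ℓ => x ∈ ℓ).card : ZMod 2)
            = ∑ ℓ ∈ S, if x ∈ ℓ then (1 : ZMod 2) else 0 := fun x =>
        (Finset.sum_boole _ _).symm
      rw [Finset.sum_congr rfl fun x _ => step1 x, Finset.sum_comm]
      refine Finset.sum_eq_zero fun ℓ hℓ => ?_
      obtain ⟨W, hW, rfl⟩ := hS ℓ hℓ
      rw [Finset.sum_boole]
      have hcard : (Finset.univ.filter fun x => x ∈ projLine W).card
          = Nat.card (projLine W) := by
        rw [Nat.card_eq_fintype_card]
        exact (Fintype.card_subtype _).symm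
      rw [hcard, aux_line_card W hW]
      have heven : Even (Fintype.card F + 1) := hodd.add_one
      rw [ZMod.natCast_eq_zero_iff]
      exact heven.two_dvd
    calc ((Nat.card {x : ℙ F (Fin (n + 1) → F) |
            c x + ((S.filter fun ℓ => x ∈ ℓ).card : ZMod 2) = 1} : ℕ) : ZMod 2)
        = ∑ x, (c x + ((S.filter fun ℓ => x ∈ ℓ).card : ZMod 2)) :=
          aux_key (fun x => c x + ((S.filter fun ℓ => x ∈ ℓ).card : ZMod 2))
      _ = ∑ x, c x + ∑ x, ((S.filter fun ℓ => x ∈ ℓ).card : ZMod 2) :=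
          Finset.sum_add_distrib
      _ = ∑ x, c x := by rw [hflip, add_zero]
      _ = ((Nat.card {x : ℙ F (Fin (n + 1) → F) | c x = 1} : ℕ) : ZMod 2) :=
          (aux_key c).symm
  refine ⟨parity, ?_⟩
  rintro c hc ⟨S, hS, hlt⟩
  have h := parity c S hS
  rw [hc] at hlt h
  interval_cases h' : Nat.card {x : ℙ F (Fin (n + 1) → F) |
      c x + ((S.filter fun ℓ => x ∈ ℓ).card : ZMod 2) = 1}
  · simp [Nat.ModEq] at h
end
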